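/- arXiv:1310.6874 — 11 statements merged into one kernel-verified Lean document; each statement's English description precedes it below -/
import Mathlib

section
/- Let (s_n), (α_n), (β_n), (γ_n) be sequences of real numbers with α_n ∈ [0,1] and γ_n ≥ 0 for all n, and suppose s_{n+1} ≤ (1 − α_n) s_n + α_n β_n + γ_n for all n. Let m ∈ ℕ and C ∈ ℝ be such that β_n ≤ C for all n ≥ m. Then for all n ≥ m, s_{n+1} ≤ (∏_{k=m}^{n} (1 − α_k)) · s_m + (1 − ∏_{k=m}^{n} (1 − α_k)) · C + ∑_{k=m}^{n} γ_k. -/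
open Finset in
/-- Quantitative recursive inequality lemma: an explicit bound for sequences
satisfying `s_{n+1} ≤ (1 − α_n) s_n + α_n β_n + γ_n`. -/
theorem recursive_inequality_bound
    (s α β γ : ℕ → ℝ)
    (hα : ∀ n, α n ∈ Set.Icc (0 : ℝ) 1)
    (hγ : ∀ n, 0 ≤ γ n)
    (hrec : ∀ n, s (n + 1) ≤ (1 - α n) * s n + α n * β n + γ n)
    (m : ℕ) (C : ℝ) (hβ : ∀ n, m ≤ n → β n ≤ C) :
    ∀ n, m ≤ n →
      s (n + 1) ≤ (∏ k ∈ Finset.Icc m n, (1 - α k)) * s m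
        + (1 - ∏ k ∈ Finset.Icc m n, (1 - α k)) * C
        + ∑ k ∈ Finset.Icc m n, γ k := by
  intro n hn
  induction n with
  | zero =>
      interval_cases m
      simp only [Finset.Icc_self, Finset.prod_singleton, Finset.sum_singleton]
      have := hrec 0
      have hb := hβ 0 le_rfl
      have ha := (hα 0).1
      nlinarith
  | succ n ih =>
      rcases Nat.lt_or_ge m (n + 1) with h | h
      · have hmn : m ≤ n := Nat.lt_succ_iff.mp h
        have IH := ih hmn
        have ha0 := (hα (n + 1)).1
        have ha1 := (hα (n + 1)).2
        have hP : 0 ≤ ∏ k ∈ Finset.Icc m n, (1 - α k) :=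
          Finset.prod_nonneg fun k _ => by linarith [(hα k).2]
        have hS : 0 ≤ ∑ k ∈ Finset.Icc m n, γ k :=
          Finset.sum_nonneg fun k _ => hγ k
        have hb := hβ (n + 1) h.le
        have hstep := hrec (n + 1)
        rw [Finset.prod_Icc_succ_top (by omega), Finset.sum_Icc_succ_top (by omega)]
        set P := ∏ k ∈ Finset.Icc m n, (1 - α k)
        set S := ∑ k ∈ Finset.Icc m n, γ k
        have h1 : (1 - α (n+1)) * s (n+1) ≤ (1 - α (n+1)) * (P * s m + (1 - P) * C + S) :=
          mul_le_mul_of_nonneg_left IH (by linarith)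
        nlinarith [mul_nonneg ha0 hP, hγ (n+1)]
      · have hm : m = n + 1 := le_antisymm hn h
        subst hm
        simp only [Finset.Icc_self, Finset.prod_singleton, Finset.sum_singleton]
        have := hrec (n + 1)
        have hb := hβ (n + 1) le_rfl
        have ha := (hα (n + 1)).1
        nlinarith
end

section
/- Let (s_n) be a sequence of non-negative real numbers bounded above by a constant C > 0, and suppose s_{n+1} ≤ (1 − α_n) s_n + α_n β_n + γ_n for all n ≥ 0, where (α_n) ⊆ [0,1], (γ_n) ⊆ [0,∞), and (β_n) is a real sequence. Let S₁, S₂, S₃ : (0,∞) → ℕ satisfy: (a) ∏_{k=0}^{S₁(ε)} (1 − α_k) ≤ ε for all ε > 0; (b) β_n ≤ ε for all ε > 0 and all n ≥ S₂(ε); (c) ∑_{n=j}^{i} γ_n ≤ ε for all ε > 0 and all i ≥ j ≥ S₃(ε). Suppose moreover that D : (0,∞) → (0,∞) satisfies 0 < D(ε) ≤ ∏_{k=0}^{max{S₂(ε/3), S₃(ε/3)}} (1 − α_k) for all ε > 0. Then for all ε > 0 and all n ≥ Φ(ε) := max{S₁(ε·D(ε)/(3C)), S₂(ε/3), S₃(ε/3)},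 one has s_{n+1} ≤ ε. -/
/-!
Put `N := max (S₂ (ε/3)) (S₃ (ε/3))`. From `N` on, `β ≤ ε/3`, so `t := s - ε/3` satisfies
`t (k+1) ≤ (1 - α k) t k + γ k`; unrolling gives
`s (n+1) - ε/3 ≤ (∏_{k=N}^{n} (1 - α k)) C + ∑_{k=N}^{n} γ k`.
The sum is at most `ε/3` by the choice of `S₃`. The tail product is the full product up to `n`,
which is at most `ε D(ε) / (3C)` by the choice of `S₁`, divided by the head product up to `N`,
which is at least `D(ε)`; hence the first term is at most `ε/3` as well.
-/

open Finset

theorem antitone_prod_range_of_le_one {f : ℕ → ℝ} (hf₀ : ∀ k, 0 ≤ f k) (hf₁ : ∀ k, f k ≤ 1) :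
    Antitone fun n ↦ ∏ k ∈ range n, f k :=
  antitone_nat_of_succ_le fun n ↦ by
    rw [prod_range_succ]
    exact mul_le_of_le_one_right (prod_nonneg fun k _ ↦ hf₀ k) (hf₁ n)

theorem prod_Ico_le_of_prod_range_le {f : ℕ → ℝ} (hf₀ : ∀ k, 0 ≤ f k) (hf₁ : ∀ k, f k ≤ 1)
    {N M n : ℕ} {D δ : ℝ} (hD : 0 < D) (hDN : D ≤ ∏ k ∈ range N, f k)
    (hM : ∏ k ∈ range M, f k ≤ δ * D) (hMn : M ≤ n) (hNn : N ≤ n) :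
    ∏ k ∈ Ico N n, f k ≤ δ := by
  have hhead : 0 < ∏ k ∈ range N, f k := hD.trans_le hDN
  refine le_of_mul_le_mul_left ?_ hhead
  calc (∏ k ∈ range N, f k) * ∏ k ∈ Ico N n, f k = ∏ k ∈ range n, f k :=
        prod_range_mul_prod_Ico f hNn
    _ ≤ ∏ k ∈ range M, f k := antitone_prod_range_of_le_one hf₀ hf₁ hMn
    _ ≤ δ * D := hM
    _ = D * δ := mul_comm δ D
    _ ≤ (∏ k ∈ range N, f k) * δ := by
        have hδ : 0 ≤ δ :=
          nonneg_of_mul_nonneg_left ((prod_nonneg fun k _ ↦ hf₀ k).trans hM) hD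
        gcongr

theorem le_prod_Ico_mul_add_sum_Ico_of_le_mul_add {s a γ : ℕ → ℝ} {N : ℕ}
    (ha₀ : ∀ k, 0 ≤ a k) (ha₁ : ∀ k, a k ≤ 1) (hγ : ∀ k, 0 ≤ γ k)
    (hrec : ∀ k, N ≤ k → s (k + 1) ≤ a k * s k + γ k) :
    ∀ n, N ≤ n → s n ≤ (∏ k ∈ Ico N n, a k) * s N + ∑ k ∈ Ico N n, γ k := by
  refine Nat.le_induction (by simp) fun n hNn ih ↦ ?_
  have hsum : 0 ≤ ∑ k ∈ Ico N n, γ k := sum_nonneg fun k _ ↦ hγ k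
  rw [prod_Ico_succ_top hNn, sum_Ico_succ_top hNn]
  calc s (n + 1) ≤ a n * s n + γ n := hrec n hNn
    _ ≤ a n * ((∏ k ∈ Ico N n, a k) * s N + ∑ k ∈ Ico N n, γ k) + γ n := by
        gcongr
        exact ha₀ n
    _ ≤ (∏ k ∈ Ico N n, a k) * a n * s N + (∑ k ∈ Ico N n, γ k + γ n) := by
        linear_combination mul_le_of_le_one_left hsum (ha₁ n)

theorem sub_le_prod_Ico_mul_add_sum_Ico_of_xu_rec {s α β γ : ℕ → ℝ} {b : ℝ} {N : ℕ}
    (hα : ∀ k, α k ∈ Set.Icc (0 : ℝ) 1) (hγ : ∀ k, 0 ≤ γ k)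
    (hrec : ∀ k, s (k + 1) ≤ (1 - α k) * s k + α k * β k + γ k)
    (hβ : ∀ k, N ≤ k → β k ≤ b) {n : ℕ} (hNn : N ≤ n) :
    s n - b ≤ (∏ k ∈ Ico N n, (1 - α k)) * (s N - b) + ∑ k ∈ Ico N n, γ k := by
  refine le_prod_Ico_mul_add_sum_Ico_of_le_mul_add (s := fun k ↦ s k - b)
    (fun k ↦ sub_nonneg.2 (hα k).2) (fun k ↦ sub_le_self 1 (hα k).1) hγ (fun k hk ↦ ?_) n hNn
  have := mul_le_mul_of_nonneg_left (hβ k hk) (hα k).1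
  linarith [hrec k]

open Finset in
/-- Quantitative version of Xu's convergence lemma, with explicit rates. -/
theorem xu_lemma_quantitative
    (s α β γ : ℕ → ℝ) (C : ℝ) (hC : 0 < C)
    (hs : ∀ n, 0 ≤ s n ∧ s n ≤ C)
    (hα : ∀ n, α n ∈ Set.Icc (0 : ℝ) 1)
    (hγ : ∀ n, 0 ≤ γ n)
    (hrec : ∀ n, s (n + 1) ≤ (1 - α n) * s n + α n * β n + γ n)
    (S₁ S₂ S₃ : ℝ → ℕ)
    (hS₁ : ∀ ε > (0 : ℝ), ∏ k ∈ Finset.range (S₁ ε + 1), (1 - α k) ≤ ε)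
    (hS₂ : ∀ ε > (0 : ℝ), ∀ n, S₂ ε ≤ n → β n ≤ ε)
    (hS₃ : ∀ ε > (0 : ℝ), ∀ i j : ℕ, S₃ ε ≤ j → j ≤ i →
      ∑ n ∈ Finset.Icc j i, γ n ≤ ε)
    (D : ℝ → ℝ)
    (hD : ∀ ε > (0 : ℝ), 0 < D ε ∧
      D ε ≤ ∏ k ∈ Finset.range (max (S₂ (ε / 3)) (S₃ (ε / 3)) + 1), (1 - α k)) :
    ∀ ε > (0 : ℝ), ∀ n,
      max (S₁ (ε * D ε / (3 * C))) (max (S₂ (ε / 3)) (S₃ (ε / 3))) ≤ n →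
      s (n + 1) ≤ ε := by
  intro ε hε n hn
  set N := max (S₂ (ε / 3)) (S₃ (ε / 3))
  obtain ⟨hDpos, hDle⟩ := hD ε hε
  have hε3 : 0 < ε / 3 := by positivity
  have hf₀ : ∀ k, 0 ≤ 1 - α k := fun k ↦ sub_nonneg.2 (hα k).2
  have hf₁ : ∀ k, 1 - α k ≤ 1 := fun k ↦ sub_le_self 1 (hα k).1
  have hNn : N ≤ n := le_of_max_le_right hn
  have hunroll := sub_le_prod_Ico_mul_add_sum_Ico_of_xu_rec (b := ε / 3) hα hγ hrec
    (fun k hk ↦ hS₂ _ hε3 k (le_of_max_le_left hk)) (Nat.le_succ_of_le hNn)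
  have hsum : ∑ k ∈ Ico N (n + 1), γ k ≤ ε / 3 := by
    rw [Ico_add_one_right_eq_Icc]
    exact hS₃ _ hε3 n N (le_max_right _ _) hNn
  have hprod : ∏ k ∈ Ico N (n + 1), (1 - α k) ≤ ε / (3 * C) :=
    prod_Ico_le_of_prod_range_le hf₀ hf₁ hDpos
      (hDle.trans (antitone_prod_range_of_le_one hf₀ hf₁ N.le_succ))
      ((hS₁ _ (by positivity)).trans_eq (by ring))
      (Nat.succ_le_succ (le_of_max_le_left hn)) (Nat.le_succ_of_le hNn)
  have hprodC : (∏ k ∈ Ico N (n + 1), (1 - α k)) * (s N - ε / 3) ≤ ε / 3 :=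
    calc _ ≤ (∏ k ∈ Ico N (n + 1), (1 - α k)) * C :=
          mul_le_mul_of_nonneg_left (by linarith [(hs N).2]) (prod_nonneg fun k _ ↦ hf₀ k)
      _ ≤ ε / (3 * C) * C := mul_le_mul_of_nonneg_right hprod hC.le
      _ = ε / 3 := by field_simp
  linarith
end

section
/- Let X be a real normed space, C ⊆ X a closed convex subset, and S : C → C a nonexpansive mapping with a fixed point p ∈ C. Let u, x₀ ∈ C and M > 0 with 2·max{‖p − x₀‖, ‖p − u‖} ≤ M. Let (α_n) ⊆ (0,1) and let R₁, R₂, R₃ : (0,∞) → ℕ satisfy: (i) α_n ≤ ε for all ε > 0 and n ≥ R₁(ε); (ii) ∏_{k=0}^{R₂(ε)} (1 − α_k) ≤ ε for all ε > 0; (iii) |α_n − α_{n−1}| ≤ ε·α_n for all ε > 0 and n ≥ R₃(ε). Suppose D : (0,∞) → (0,∞) satisfies 0 < D(ε) ≤ ∏_{k=0}^{R₃(ε/(3M))} (1 − α_k) for all ε > 0. Let (x_n) be the Halpern iteration x_{n+1} := α_n u + (1 − α_n) S x_n. Then for all ε > 0 and all n ≥ ψ(ε) := max{R₁(ε/(2M)),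 R₂(ε·D(ε/2)/(6M)), R₃(ε/(6M))}, one has ‖x_n − S x_n‖ ≤ ε; that is, ψ is a rate of asymptotic regularity for (x_n). -/
open Finset in
/-- Quantitative asymptotic regularity of the Halpern iteration in normed
spaces: `ψ` is a rate of asymptotic regularity for `(x_n)`. -/
theorem halpern_asymptotic_regularity
    {X : Type*} [NormedAddCommGroup X] [NormedSpace ℝ X]
    (C : Set X) (hCclosed : IsClosed C) (hCconv : Convex ℝ C)
    (S : X → X) (hSmaps : Set.MapsTo S C C)
    (hSne : ∀ x ∈ C, ∀ y ∈ C, ‖S x - S y‖ ≤ ‖x - y‖)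
    (p : X) (hp : p ∈ C) (hpfix : S p = p)
    (u x₀ : X) (hu : u ∈ C) (hx₀ : x₀ ∈ C)
    (M : ℝ) (hM : 0 < M)
    (hbound : 2 * max ‖p - x₀‖ ‖p - u‖ ≤ M)
    (α : ℕ → ℝ) (hα : ∀ n, α n ∈ Set.Ioo (0 : ℝ) 1)
    (R₁ R₂ R₃ : ℝ → ℕ)
    (hR₁ : ∀ ε > (0 : ℝ), ∀ n, R₁ ε ≤ n → α n ≤ ε)
    (hR₂ : ∀ ε > (0 : ℝ), ∏ k ∈ Finset.range (R₂ ε + 1), (1 - α k) ≤ ε)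
    (hR₃ : ∀ ε > (0 : ℝ), ∀ n, R₃ ε ≤ n → |α n - α (n - 1)| ≤ ε * α n)
    (D : ℝ → ℝ)
    (hD : ∀ ε > (0 : ℝ), 0 < D ε ∧
      D ε ≤ ∏ k ∈ Finset.range (R₃ (ε / (3 * M)) + 1), (1 - α k))
    (x : ℕ → X) (hx0 : x 0 = x₀)
    (hx : ∀ n, x (n + 1) = α n • u + (1 - α n) • S (x n)) :
    ∀ ε > (0 : ℝ), ∀ n,
      max (R₁ (ε / (2 * M)))
        (max (R₂ (ε * D (ε / 2) / (6 * M))) (R₃ (ε / (6 * M)))) ≤ n →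
      ‖x n - S (x n)‖ ≤ ε := by
  have hpx₀ : ‖p - x₀‖ ≤ M / 2 := by
    have := le_max_left ‖p - x₀‖ ‖p - u‖; linarith
  have hpu : ‖p - u‖ ≤ M / 2 := by
    have := le_max_right ‖p - x₀‖ ‖p - u‖; linarith
  have hα0 : ∀ k, (0:ℝ) < α k := fun k => (hα k).1
  have hα1 : ∀ k, α k < 1 := fun k => (hα k).2
  have hfac : ∀ k, (0:ℝ) < 1 - α k := fun k => by linarith [hα1 k]
  have memC : ∀ n, x n ∈ C := by
    intro n
    induction n with
    | zero => rw [hx0]; exact hx₀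
    | succ n ih =>
      rw [hx n]
      exact hCconv hu (hSmaps ih) (le_of_lt (hα0 n)) (by linarith [hα1 n]) (by ring)
  have hxp : ∀ n, ‖x n - p‖ ≤ M / 2 := by
    intro n
    induction n with
    | zero => rw [hx0, ← norm_sub_rev]; exact hpx₀
    | succ n ih =>
      have hid : x (n+1) - p = α n • (u - p) + (1 - α n) • (S (x n) - p) := by
        rw [hx n]; module
      have hSp : ‖S (x n) - p‖ ≤ ‖x n - p‖ := by
        have h := hSne (x n) (memC n) p hp
        rwa [hpfix] at h
      calc ‖x (n+1) - p‖ ≤ ‖α n • (u - p)‖ + ‖(1 - α n) • (S (x n) - p)‖ := by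
            rw [hid]; exact norm_add_le _ _
        _ = α n * ‖u - p‖ + (1 - α n) * ‖S (x n) - p‖ := by
            rw [norm_smul, norm_smul, Real.norm_of_nonneg (le_of_lt (hα0 n)),
              Real.norm_of_nonneg (le_of_lt (hfac n))]
        _ ≤ α n * (M/2) + (1 - α n) * (M/2) := by
            have h1 : ‖u - p‖ ≤ M/2 := by rw [norm_sub_rev]; exact hpu
            have h2 : ‖S (x n) - p‖ ≤ M/2 := le_trans hSp ih
            have := hα0 n; have := hfac n
            nlinarith
        _ = M/2 := by ring
  have hSxp : ∀ n, ‖S (x n) - p‖ ≤ M / 2 := by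
    intro n
    have h := hSne (x n) (memC n) p hp
    rw [hpfix] at h
    exact le_trans h (hxp n)
  have huS : ∀ n, ‖u - S (x n)‖ ≤ M := by
    intro n
    have e : u - S (x n) = (u - p) + (p - S (x n)) := by abel
    rw [e]
    calc ‖(u - p) + (p - S (x n))‖ ≤ ‖u - p‖ + ‖p - S (x n)‖ := norm_add_le _ _
      _ ≤ M/2 + M/2 := by
          rw [norm_sub_rev u p, norm_sub_rev p (S (x n))]
          exact add_le_add hpu (hSxp n)
      _ = M := by ring
  have hbM : ∀ k, ‖x (k+1) - x k‖ ≤ M := by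
    intro k
    have e : x (k+1) - x k = (x (k+1) - p) + (p - x k) := by abel
    rw [e]
    calc ‖(x (k+1) - p) + (p - x k)‖ ≤ ‖x (k+1) - p‖ + ‖p - x k‖ := norm_add_le _ _
      _ ≤ M/2 + M/2 := by
          rw [norm_sub_rev p (x k)]
          exact add_le_add (hxp (k+1)) (hxp k)
      _ = M := by ring
  have hPpos : ∀ m, (0:ℝ) < ∏ k ∈ Finset.range m, (1 - α k) :=
    fun m => Finset.prod_pos (fun k _ => hfac k)
  have hPanti : ∀ {a b : ℕ}, a ≤ b →
      (∏ k ∈ Finset.range b, (1 - α k)) ≤ ∏ k ∈ Finset.range a, (1 - α k) := by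
    intro a b hab
    rw [← Finset.prod_range_mul_prod_Ico _ hab]
    have h1 : (∏ k ∈ Finset.Ico a b, (1 - α k)) ≤ 1 :=
      Finset.prod_le_one (fun i _ => le_of_lt (hfac i)) (fun i _ => by linarith [hα0 i])
    exact mul_le_of_le_one_right (le_of_lt (hPpos a)) h1
  intro ε hε n hn
  have hn1 : R₁ (ε / (2*M)) ≤ n := le_trans (le_max_left _ _) hn
  have hn2 : R₂ (ε * D (ε/2) / (6*M)) ≤ n :=
    le_trans (le_trans (le_max_left _ _) (le_max_right _ _)) hn
  have hn3 : R₃ (ε / (6*M)) ≤ n :=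
    le_trans (le_trans (le_max_right _ _) (le_max_right _ _)) hn
  have hD' := hD (ε/2) (by positivity)
  have harg : ε/2/(3*M) = ε/(6*M) := by ring
  rw [harg] at hD'
  obtain ⟨hDpos, hDle⟩ := hD'
  set N := R₃ (ε/(6*M)) with hN
  set N₀ := max N 1 with hN₀
  have hN₀pos : 1 ≤ N₀ := le_max_right _ _
  have hε6 : (0:ℝ) < ε / (6*M) := by positivity
  have hε' : (0:ℝ) < ε * D (ε/2) / (6*M) := div_pos (mul_pos hε hDpos) (by linarith)
  -- key recursion
  have hrec : ∀ m, N ≤ m + 1 →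
      ‖x (m+2) - x (m+1)‖ ≤ (1 - α (m+1)) * ‖x (m+1) - x m‖ + α (m+1) * (ε/6) := by
    intro m hm
    have hid : x (m+2) - x (m+1)
        = (α (m+1) - α m) • (u - S (x m)) + (1 - α (m+1)) • (S (x (m+1)) - S (x m)) := by
      rw [hx (m+1), hx m]; module
    have h3 := hR₃ (ε/(6*M)) hε6 (m+1) hm
    simp only [Nat.add_sub_cancel] at h3
    have hSS : ‖S (x (m+1)) - S (x m)‖ ≤ ‖x (m+1) - x m‖ :=
      hSne _ (memC (m+1)) _ (memC m)
    calc ‖x (m+2) - x (m+1)‖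
        ≤ ‖(α (m+1) - α m) • (u - S (x m))‖ + ‖(1 - α (m+1)) • (S (x (m+1)) - S (x m))‖ := by
          rw [hid]; exact norm_add_le _ _
      _ = |α (m+1) - α m| * ‖u - S (x m)‖ + (1 - α (m+1)) * ‖S (x (m+1)) - S (x m)‖ := by
          rw [norm_smul, norm_smul, Real.norm_eq_abs,
            Real.norm_of_nonneg (le_of_lt (hfac (m+1)))]
      _ ≤ (ε/(6*M) * α (m+1)) * M + (1 - α (m+1)) * ‖x (m+1) - x m‖ := by
          refine add_le_add ?_ (mul_le_mul_of_nonneg_left hSS (le_of_lt (hfac (m+1))))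
          exact mul_le_mul h3 (huS m) (norm_nonneg _) (mul_nonneg (le_of_lt hε6) (le_of_lt (hα0 (m+1))))
      _ = (1 - α (m+1)) * ‖x (m+1) - x m‖ + α (m+1) * (ε/6) := by
          field_simp
          ring
  -- telescoping
  have htel : ∀ m, N₀ - 1 ≤ m →
      ‖x (m+1) - x m‖ ≤ ε/6 + (∏ k ∈ Finset.Ico N₀ (m+1), (1 - α k)) * M := by
    intro m hm
    induction m, hm using Nat.le_induction with
    | base =>
      have e : N₀ - 1 + 1 = N₀ := Nat.succ_pred_eq_of_pos hN₀pos
      rw [e, Finset.Ico_self, Finset.prod_empty, one_mul]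
      have := hbM (N₀ - 1)
      rw [e] at this
      linarith
    | succ m hm ih =>
      have hNm : N ≤ m + 1 := by omega
      have hr := hrec m hNm
      have hprod : (∏ k ∈ Finset.Ico N₀ (m+1+1), (1 - α k))
          = (∏ k ∈ Finset.Ico N₀ (m+1), (1 - α k)) * (1 - α (m+1)) :=
        Finset.prod_Ico_succ_top (by omega) _
      rw [hprod]
      have h5 : (1 - α (m+1)) * ‖x (m+1) - x m‖
          ≤ (1 - α (m+1)) * (ε/6 + (∏ k ∈ Finset.Ico N₀ (m+1), (1 - α k)) * M) :=
        mul_le_mul_of_nonneg_left ih (le_of_lt (hfac (m+1)))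
      nlinarith [hr, h5]
  have hQ := htel n (by omega)
  -- product bounds
  have hP1 : (∏ k ∈ Finset.range (n+1), (1 - α k)) ≤ ε * D (ε/2) / (6*M) :=
    le_trans (hPanti (by omega : R₂ (ε * D (ε/2) / (6*M)) + 1 ≤ n + 1)) (hR₂ _ hε')
  have hP2 : D (ε/2) ≤ ∏ k ∈ Finset.range N₀, (1 - α k) :=
    le_trans hDle (hPanti (by omega : N₀ ≤ N + 1))
  have hsplit : (∏ k ∈ Finset.range N₀, (1 - α k)) * (∏ k ∈ Finset.Ico N₀ (n+1), (1 - α k))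
      = ∏ k ∈ Finset.range (n+1), (1 - α k) :=
    Finset.prod_range_mul_prod_Ico _ (by omega)
  have hQnonneg : 0 ≤ ∏ k ∈ Finset.Ico N₀ (n+1), (1 - α k) :=
    Finset.prod_nonneg fun i _ => le_of_lt (hfac i)
  have hQle : (∏ k ∈ Finset.Ico N₀ (n+1), (1 - α k)) * M ≤ ε/6 := by
    have h1 : (∏ k ∈ Finset.Ico N₀ (n+1), (1 - α k)) * D (ε/2) ≤ ε * D (ε/2) / (6*M) := by
      calc (∏ k ∈ Finset.Ico N₀ (n+1), (1 - α k)) * D (ε/2)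
          ≤ (∏ k ∈ Finset.Ico N₀ (n+1), (1 - α k)) * (∏ k ∈ Finset.range N₀, (1 - α k)) :=
            mul_le_mul_of_nonneg_left hP2 hQnonneg
        _ = ∏ k ∈ Finset.range (n+1), (1 - α k) := by rw [mul_comm]; exact hsplit
        _ ≤ ε * D (ε/2) / (6*M) := hP1
    have h2 : (∏ k ∈ Finset.Ico N₀ (n+1), (1 - α k)) ≤ ε / (6*M) := by
      refine le_of_mul_le_mul_right ?_ hDpos
      calc (∏ k ∈ Finset.Ico N₀ (n+1), (1 - α k)) * D (ε/2)
          ≤ ε * D (ε/2) / (6*M) := h1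
        _ = ε / (6*M) * D (ε/2) := by ring
    have h3 : (∏ k ∈ Finset.Ico N₀ (n+1), (1 - α k)) * M ≤ (ε/(6*M)) * M :=
      mul_le_mul_of_nonneg_right h2 (le_of_lt hM)
    have h4 : (ε/(6*M)) * M = ε/6 := by field_simp
    linarith
  -- final assembly
  have hα_n : α n ≤ ε/(2*M) := hR₁ _ (by positivity) n hn1
  have hfinal1 : ‖x (n+1) - S (x n)‖ ≤ ε/2 := by
    have hid : x (n+1) - S (x n) = α n • (u - S (x n)) := by rw [hx n]; module
    rw [hid, norm_smul, Real.norm_of_nonneg (le_of_lt (hα0 n))]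
    calc α n * ‖u - S (x n)‖ ≤ (ε/(2*M)) * M :=
          mul_le_mul hα_n (huS n) (norm_nonneg _) (by positivity)
      _ = ε/2 := by field_simp
  have htri : ‖x n - S (x n)‖ ≤ ‖x n - x (n+1)‖ + ‖x (n+1) - S (x n)‖ := by
    have e : x n - S (x n) = (x n - x (n+1)) + (x (n+1) - S (x n)) := by abel
    rw [e]; exact norm_add_le _ _
  rw [norm_sub_rev (x n) (x (n+1))] at htri
  linarith
end

section
/- Let X be a real normed space, C ⊆ X a closed convex subset, and S : C → C a nonexpansive mapping with a fixed point p ∈ C. Let u, x₀ ∈ C and M ≥ 1 with 2·max{‖p − x₀‖, ‖p − u‖} ≤ M. Let (x_n) be the Halpern iteration x_{n+1} := (1/(n+1)) u + (1 − 1/(n+1)) S x_n. Then for every ε with 0 < ε ≤ 3/2 and every n ≥ ⌊36 M²/ε²⌋, one has ‖x_n − S x_n‖ ≤ ε. -/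
set_option maxHeartbeats 2000000 in
/-- Quadratic rate of asymptotic regularity for the Halpern iteration with
`α_n = 1/(n+1)` in normed spaces. -/
theorem halpern_asymptotic_regularity_quadratic
    {X : Type*} [NormedAddCommGroup X] [NormedSpace ℝ X]
    (C : Set X) (hCclosed : IsClosed C) (hCconv : Convex ℝ C)
    (S : X → X) (hSmaps : Set.MapsTo S C C)
    (hSne : ∀ x ∈ C, ∀ y ∈ C, ‖S x - S y‖ ≤ ‖x - y‖)
    (p : X) (hp : p ∈ C) (hpfix : S p = p)
    (u x₀ : X) (hu : u ∈ C) (hx₀ : x₀ ∈ C)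
    (M : ℝ) (hM : 1 ≤ M)
    (hbound : 2 * max ‖p - x₀‖ ‖p - u‖ ≤ M)
    (x : ℕ → X) (hx0 : x 0 = x₀)
    (hx : ∀ n : ℕ, x (n + 1) =
      (1 / (n + 1) : ℝ) • u + (1 - 1 / (n + 1) : ℝ) • S (x n)) :
    ∀ ε : ℝ, 0 < ε → ε ≤ 3 / 2 → ∀ n : ℕ,
      ⌊36 * M ^ 2 / ε ^ 2⌋₊ ≤ n → ‖x n - S (x n)‖ ≤ ε := by
  have hM0 : (0:ℝ) < M := lt_of_lt_of_le one_pos hM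
  have hup : ‖u - p‖ ≤ M / 2 := by
    rw [norm_sub_rev]
    have h := le_max_right ‖p - x₀‖ ‖p - u‖
    linarith
  have hx0p : ‖x₀ - p‖ ≤ M / 2 := by
    rw [norm_sub_rev]
    have h := le_max_left ‖p - x₀‖ ‖p - u‖
    linarith
  -- membership and boundedness
  have key : ∀ k : ℕ, x k ∈ C ∧ ‖x k - p‖ ≤ M / 2 := by
    intro k
    induction k with
    | zero => exact ⟨hx0 ▸ hx₀, hx0 ▸ hx0p⟩
    | succ k ih =>
      obtain ⟨hkC, hkp⟩ := ih
      have hSk : S (x k) ∈ C := hSmaps hkC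
      have hk0 : (0:ℝ) ≤ (k:ℝ) := Nat.cast_nonneg k
      have ha0 : (0:ℝ) ≤ 1 / ((k:ℝ)+1) := by positivity
      have ha1 : (1:ℝ) / ((k:ℝ)+1) ≤ 1 := by
        rw [div_le_one (by positivity)]; linarith
      have hSkp : ‖S (x k) - p‖ ≤ M / 2 := by
        calc ‖S (x k) - p‖ = ‖S (x k) - S p‖ := by rw [hpfix]
        _ ≤ ‖x k - p‖ := hSne _ hkC _ hp
        _ ≤ M / 2 := hkp
      refine ⟨?_, ?_⟩
      · rw [hx k]
        exact hCconv hu hSk ha0 (by linarith) (by ring)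
      · have hid : x (k+1) - p
            = (1/((k:ℝ)+1)) • (u - p) + (1 - 1/((k:ℝ)+1)) • (S (x k) - p) := by
          rw [hx k]; module
        calc ‖x (k+1) - p‖
            = ‖(1/((k:ℝ)+1)) • (u - p) + (1 - 1/((k:ℝ)+1)) • (S (x k) - p)‖ := by
              rw [hid]
        _ ≤ (1/((k:ℝ)+1)) * ‖u - p‖ + (1 - 1/((k:ℝ)+1)) * ‖S (x k) - p‖ := by
              refine (norm_add_le _ _).trans ?_
              rw [norm_smul, norm_smul, Real.norm_of_nonneg ha0,
                Real.norm_of_nonneg (by linarith)]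
        _ ≤ (1/((k:ℝ)+1)) * (M/2) + (1 - 1/((k:ℝ)+1)) * (M/2) := by
              gcongr <;> linarith
        _ = M/2 := by ring
  have hUS : ∀ k, ‖u - S (x k)‖ ≤ M := by
    intro k
    have hSkp : ‖S (x k) - p‖ ≤ M / 2 := by
      calc ‖S (x k) - p‖ = ‖S (x k) - S p‖ := by rw [hpfix]
      _ ≤ ‖x k - p‖ := hSne _ (key k).1 _ hp
      _ ≤ M / 2 := (key k).2
    calc ‖u - S (x k)‖ ≤ ‖u - p‖ + ‖p - S (x k)‖ :=
          norm_sub_le_norm_sub_add_norm_sub u p (S (x k))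
    _ = ‖u - p‖ + ‖S (x k) - p‖ := by rw [norm_sub_rev p]
    _ ≤ M/2 + M/2 := add_le_add hup hSkp
    _ = M := by ring
  -- key successive-difference bound
  have hb : ∀ k : ℕ, ((k:ℝ)+1) * ‖x (k+1) - x k‖ ≤ M * (1 + 2 * Real.sqrt k) := by
    intro k
    induction k with
    | zero =>
      simp only [Nat.cast_zero, Real.sqrt_zero, zero_add, one_mul, mul_zero, add_zero,
        mul_one]
      calc ‖x 1 - x 0‖ ≤ ‖x 1 - p‖ + ‖p - x 0‖ :=
            norm_sub_le_norm_sub_add_norm_sub _ _ _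
      _ = ‖x 1 - p‖ + ‖x 0 - p‖ := by rw [norm_sub_rev p]
      _ ≤ M/2 + M/2 := add_le_add (key 1).2 (key 0).2
      _ = M := by ring
    | succ k ih =>
      have hk0 : (0:ℝ) ≤ (k:ℝ) := Nat.cast_nonneg k
      have hk1 : (0:ℝ) < (k:ℝ) + 1 := by linarith
      have hk2 : (0:ℝ) < (k:ℝ) + 2 := by linarith
      have hid : x (k+2) - x (k+1)
          = (1/((k:ℝ)+2) - 1/((k:ℝ)+1)) • (u - S (x k))
            + (1 - 1/((k:ℝ)+2)) • (S (x (k+1)) - S (x k)) := by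
        have h1 := hx (k+1)
        have h2 := hx k
        push_cast at h1
        rw [h1, h2]
        module
      have hne : ‖S (x (k+1)) - S (x k)‖ ≤ ‖x (k+1) - x k‖ :=
        hSne _ (key (k+1)).1 _ (key k).1
      have habs : |1/((k:ℝ)+2) - 1/((k:ℝ)+1)| = 1/(((k:ℝ)+1)*((k:ℝ)+2)) := by
        rw [abs_of_nonpos (by
          rw [sub_nonpos]
          gcongr <;> linarith)]
        field_simp
        ring
      have h01 : (0:ℝ) ≤ 1 - 1/((k:ℝ)+2) := by
        have : 1/((k:ℝ)+2) ≤ 1 := by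
          rw [div_le_one hk2]; linarith
        linarith
      have hnorm : ‖x (k+2) - x (k+1)‖
          ≤ 1/(((k:ℝ)+1)*((k:ℝ)+2)) * M + (1 - 1/((k:ℝ)+2)) * ‖x (k+1) - x k‖ := by
        rw [hid]
        refine (norm_add_le _ _).trans ?_
        rw [norm_smul, norm_smul, Real.norm_eq_abs, habs, Real.norm_of_nonneg h01]
        gcongr
        · exact hUS k
      -- sqrt inequality: 1/(k+1) ≤ 2√(k+1) - 2√k
      have hs := Real.sq_sqrt hk0
      have ht := Real.sq_sqrt (by linarith : (0:ℝ) ≤ (k:ℝ)+1)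
      set s := Real.sqrt k with hsdef
      set t := Real.sqrt ((k:ℝ)+1) with htdef
      have hs0 : 0 ≤ s := Real.sqrt_nonneg _
      have ht1 : 1 ≤ t := by
        rw [htdef, Real.one_le_sqrt]; linarith
      have hst : s ≤ t := Real.sqrt_le_sqrt (by linarith)
      have hsqrt : 1/((k:ℝ)+1) ≤ 2*t - 2*s := by
        rw [div_le_iff₀ hk1]
        nlinarith [sq_nonneg (t - s), sq_nonneg (t + s)]
      have hcast : ((k+1:ℕ):ℝ) = (k:ℝ) + 1 := by push_cast; ring
      rw [hcast]
      have goal' : ((k:ℝ)+2) * ‖x (k+2) - x (k+1)‖ ≤ M * (1 + 2 * t) := by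
        calc ((k:ℝ)+2) * ‖x (k+2) - x (k+1)‖
            ≤ ((k:ℝ)+2) * (1/(((k:ℝ)+1)*((k:ℝ)+2)) * M
              + (1 - 1/((k:ℝ)+2)) * ‖x (k+1) - x k‖) := by
              gcongr
        _ = M/((k:ℝ)+1) + ((k:ℝ)+1) * ‖x (k+1) - x k‖ := by
              field_simp
              ring
        _ ≤ M/((k:ℝ)+1) + M * (1 + 2 * s) := by gcongr
        _ ≤ M * (2*t - 2*s) + M * (1 + 2 * s) := by
              gcongr
              calc M/((k:ℝ)+1) = M * (1/((k:ℝ)+1)) := by ring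
              _ ≤ M * (2*t - 2*s) := by
                  apply mul_le_mul_of_nonneg_left hsqrt (le_of_lt hM0)
        _ = M * (1 + 2 * t) := by ring
      convert goal' using 2 <;> push_cast <;> ring
  -- residual bound
  have hres : ∀ k : ℕ, ‖x (k+1) - S (x (k+1))‖
      ≤ M * (2 + 2 * Real.sqrt k) / ((k:ℝ)+1) := by
    intro k
    have hk1 : (0:ℝ) < (k:ℝ) + 1 := by positivity
    have hid : x (k+1) - S (x k) = (1/((k:ℝ)+1)) • (u - S (x k)) := by
      rw [hx k]; module
    have h1 : ‖x (k+1) - S (x k)‖ ≤ M / ((k:ℝ)+1) := by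
      calc ‖x (k+1) - S (x k)‖ = 1/((k:ℝ)+1) * ‖u - S (x k)‖ := by
            rw [hid, norm_smul, Real.norm_of_nonneg (by positivity)]
      _ ≤ 1/((k:ℝ)+1) * M := by gcongr; exact hUS k
      _ = M / ((k:ℝ)+1) := by ring
    have h2 : ‖S (x k) - S (x (k+1))‖ ≤ ‖x (k+1) - x k‖ := by
      rw [norm_sub_rev]
      exact hSne _ (key (k+1)).1 _ (key k).1
    have h3 : ‖x (k+1) - x k‖ ≤ M * (1 + 2 * Real.sqrt k) / ((k:ℝ)+1) := by
      rw [le_div_iff₀ hk1, mul_comm]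
      exact hb k
    calc ‖x (k+1) - S (x (k+1))‖
        ≤ ‖x (k+1) - S (x k)‖ + ‖S (x k) - S (x (k+1))‖ :=
          norm_sub_le_norm_sub_add_norm_sub _ _ _
    _ ≤ M / ((k:ℝ)+1) + M * (1 + 2 * Real.sqrt k) / ((k:ℝ)+1) := by
        refine add_le_add h1 (h2.trans h3)
    _ = M * (2 + 2 * Real.sqrt k) / ((k:ℝ)+1) := by ring
  -- final numeric step
  intro ε hε hε' n hn
  have hε2 : (0:ℝ) < ε^2 := by positivity
  have ht16 : (16:ℝ) ≤ 36 * M^2 / ε^2 := by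
    rw [le_div_iff₀ hε2]
    nlinarith
  have hN16 : 16 ≤ ⌊36 * M ^ 2 / ε ^ 2⌋₊ := Nat.le_floor (by exact_mod_cast ht16)
  have hn16 : 16 ≤ n := le_trans hN16 hn
  obtain ⟨m, rfl⟩ : ∃ m, n = m + 1 := ⟨n - 1, by omega⟩
  have hnR : 36 * M^2 / ε^2 < (m:ℝ) + 2 := by
    have h1 : 36 * M ^ 2 / ε ^ 2 < ⌊36 * M ^ 2 / ε ^ 2⌋₊ + 1 :=
      Nat.lt_floor_add_one _
    have h2 : ((⌊36 * M ^ 2 / ε ^ 2⌋₊ : ℕ):ℝ) ≤ (m:ℝ) + 1 := by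
      exact_mod_cast hn
    linarith
  -- so (m+1) ≥ (15/16) * 36 M²/ε²
  have hm1 : (15:ℝ) ≤ (m:ℝ) := by
    have : (16:ℕ) ≤ m + 1 := hn16
    have : (15:ℕ) ≤ m := by omega
    exact_mod_cast this
  have hkey : (135/4) * M^2 ≤ ((m:ℝ)+1) * ε^2 := by
    have h1 : 36 * M^2 < ((m:ℝ)+2) * ε^2 := by
      rw [div_lt_iff₀ hε2] at hnR
      linarith
    have h2 : (m:ℝ)+2 ≤ (16/15) * ((m:ℝ)+1) := by linarith
    have h3 : ((m:ℝ)+2) * ε^2 ≤ (16/15) * ((m:ℝ)+1) * ε^2 :=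
      mul_le_mul_of_nonneg_right h2 hε2.le
    linarith
  have hm0 : (0:ℝ) < (m:ℝ) + 1 := by linarith
  have hmain : M * (2 + 2 * Real.sqrt m) / ((m:ℝ)+1) ≤ ε := by
    rw [div_le_iff₀ hm0]
    have hsle : Real.sqrt m ≤ Real.sqrt ((m:ℝ)+1) := Real.sqrt_le_sqrt (by linarith)
    have hsq : (Real.sqrt ((m:ℝ)+1))^2 = (m:ℝ)+1 := Real.sq_sqrt (by linarith)
    have ht1 : (1:ℝ) ≤ Real.sqrt ((m:ℝ)+1) := Real.one_le_sqrt.mpr (by linarith)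
    set t := Real.sqrt ((m:ℝ)+1) with htdef
    have ht0 : (0:ℝ) ≤ t := Real.sqrt_nonneg _
    have hsq2 : (4*M)^2 ≤ (ε*t)^2 := by
      have e1 : (ε*t)^2 = ε^2 * ((m:ℝ)+1) := by rw [mul_pow, hsq]
      have e2 : (4*M)^2 = 16 * M^2 := by ring
      rw [e1, e2]
      have hc : ((m:ℝ)+1) * ε^2 = ε^2 * ((m:ℝ)+1) := mul_comm _ _
      linarith [hkey, sq_nonneg M, hc]
    have h4 : 4 * M ≤ ε * t := by
      have h40 : (0:ℝ) ≤ 4 * M := by linarith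
      have het : (0:ℝ) ≤ ε * t := by positivity
      exact (pow_le_pow_iff_left₀ h40 het (by norm_num)).mp hsq2
    have hA : 4*M*t ≤ ε*t*t := mul_le_mul_of_nonneg_right h4 ht0
    have htt : t * t = (m:ℝ)+1 := by rw [← hsq]; ring
    have f1 : 2*M*Real.sqrt m ≤ 2*M*t :=
      mul_le_mul_of_nonneg_left hsle (by linarith)
    have f2 : 2*M ≤ 2*M*t := by
      have h := mul_le_mul_of_nonneg_left ht1 (show (0:ℝ) ≤ 2*M by linarith)
      linarith
    have hB : ε * t * t = ε * ((m:ℝ)+1) := by rw [mul_assoc, htt]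
    linarith
  calc ‖x (m+1) - S (x (m+1))‖ ≤ M * (2 + 2 * Real.sqrt m) / ((m:ℝ)+1) := hres m
  _ ≤ ε := hmain
end

section
/- Let X be a real Banach space carrying a duality selection mapping J : X → X* (i.e., ⟨x, Jx⟩ = ‖x‖² = ‖Jx‖² for all x ∈ X) with a modulus of continuity ω (i.e., for all M, ε > 0: ‖x‖, ‖y‖ ≤ M and ‖x − y‖ < ω(M, ε) imply ‖Jx − Jy‖ < ε). Let C ⊆ X be closed convex, S : C → C nonexpansive with a fixed point p, and let u, x₀ ∈ C and M > 0 with 2·max{‖p − x₀‖, ‖p − u‖} ≤ M. For each integer m ≥ 1 let z_m ∈ C satisfy z_m = (1/m) u + (1 − 1/m) S z_m, and suppose K is a rate of metastability for (z_m): for every ε > 0 and every g : ℕ → ℕ there exists n ≤ K(ε, g) with ‖z_k − z_l‖ ≤ ε for all k, l ∈ [n, n + g(n)]. Let (α_n) ⊆ (0,1) and R₁, R₂, R₃ : (0,∞) → ℕ satisfy: α_n ≤ ε for n ≥ R₁(ε); ∏_{k=0}^{R₂(ε)} (1 − α_k) ≤ ε; |α_n − α_{n−1}| ≤ ε·α_n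 for n ≥ R₃(ε); and let E : ℕ → (0,∞) satisfy 0 < E(k) ≤ ∏_{n=0}^{k} (1 − α_n) for all k. Let (x_n) be the Halpern iteration x_{n+1} := α_n u + (1 − α_n) S x_n. Then for every ε > 0 and every g : ℕ → ℕ there exists n ≤ Σ such that ‖x_k − x_l‖ ≤ ε for all k, l ∈ [n, n + g(n)], where Σ is defined by: δ := ε²/(144M); ε₀ := min{δ, ω(M, δ)}; D(ε′) := E(R₃(ε′/(3M))); ψ(ε′) := max{R₁(ε′/(2M)), R₂(ε′·D(ε′/2)/(6M)), R₃(ε′/(6M))}; φ(k) := ψ(ε²/(72 M k)); m₀ := ⌈72 M²/ε²⌉; g*(k) := k + g(k); Ẽ(k) := E(φ(k)); f(k) := ⌈max{24 M²·(max{g*(R₂(Ẽ(k)·ε²/(12 M²))), φ(k) + 1} − φ(k) − 1)/ε² − k, 0}⌉; f*(k) := f(k + m₀) + m₀; Γ := max{φ(k) : m₀ ≤ k ≤ K(ε₀, f*) + m₀}; Γ̃ := min{φ(k) : m₀ ≤ k ≤ K(ε₀, f*) + m₀}; and Σ := max{max{R₂(E(k)·ε²/(12 M²)), k + 1} : Γ̃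 ≤ k ≤ Γ}. -/
/-!
All iterates `xₙ`, the resolvent points `z_m` and their images under `S` stay in
`C ∩ closedBall p (M / 2)`, a set of diameter `M`. The rates `R₁, R₂, R₃` give asymptotic
regularity `‖xₙ - S xₙ‖ → 0` from the index `ψ` on. For a resolvent point `z_m`, accretivity of
`id - S` gives `J (xₙ - z_m) (u - z_m) ≤ m M ‖xₙ - S xₙ‖`, and the modulus `ω` of `J` carries this
over to `z_{m'}` whenever `‖z_m - z_{m'}‖ ≤ ε₀`; the rate `K` supplies such a pair with
`m' = m + f m`. The inequality `‖a + b‖² ≤ ‖a‖² + 2 J (a + b) b` then turns the Halpern step into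
a recursion for `‖xₙ - z_{m'}‖²` which, unrolled from `φ m` on, keeps `xₙ` within `ε / 2` of
`z_{m'}` on the whole window `[R, R + g R]`.
-/

section

open Finset Metric

theorem antitone_prod_range_one_sub {α : ℕ → ℝ} (hα : ∀ n, α n ∈ Set.Icc (0 : ℝ) 1) :
    Antitone fun n => ∏ k ∈ range n, (1 - α k) :=
  (prod_anti_set_of_le_one (fun k => sub_nonneg.2 (hα k).2)
    (fun k => sub_le_self _ (hα k).1)).comp_monotone range_mono

theorem lt_of_prod_range_le {α : ℕ → ℝ} (hα : ∀ n, α n ∈ Set.Icc (0 : ℝ) 1) {N R : ℕ} {e t : ℝ}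
    (he : 0 < e) (heN : e ≤ ∏ k ∈ range (N + 1), (1 - α k))
    (hR : ∏ k ∈ range (R + 1), (1 - α k) ≤ e * t) (ht : t < 1) : N < R := by
  have hlt : ∏ k ∈ range (R + 1), (1 - α k) < ∏ k ∈ range (N + 1), (1 - α k) :=
    hR.trans_lt ((mul_lt_of_lt_one_right he ht).trans_le heN)
  simpa using (antitone_prod_range_one_sub hα).reflect_lt hlt

theorem prod_Ico_le_of_prod_range_le_s5 {f : ℕ → ℝ} (hf : ∀ k, 0 ≤ f k) {N n : ℕ} (hNn : N ≤ n)
    {c t : ℝ} (hc : 0 < c) (hcN : c ≤ ∏ k ∈ range N, f k) (hn : ∏ k ∈ range n, f k ≤ c * t) :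
    ∏ k ∈ Ico N n, f k ≤ t := by
  rw [← prod_range_mul_prod_Ico f hNn] at hn
  refine le_of_mul_le_mul_left ?_ hc
  exact (mul_le_mul_of_nonneg_right hcN (prod_nonneg fun k _ => hf k)).trans hn

theorem le_prod_mul_add_of_recursion {β a : ℕ → ℝ} {c d : ℝ} {N : ℕ} (hc : 0 ≤ c) (hd : 0 ≤ d)
    (hβ : ∀ k, β k ∈ Set.Icc (0 : ℝ) 1)
    (hrec : ∀ k, N ≤ k → a (k + 1) ≤ (1 - β k) * a k + β k * c + d) {n : ℕ} (hn : N ≤ n) :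
    a n ≤ (∏ k ∈ Ico N n, (1 - β k)) * a N + c + (n - N : ℕ) * d := by
  induction n, hn using Nat.le_induction with
  | base => simpa using hc
  | succ n hn ih =>
    obtain ⟨hβ₀, hβ₁⟩ := hβ n
    rw [prod_Ico_succ_top hn, Nat.sub_add_comm hn, Nat.cast_succ]
    have hk : (0 : ℝ) ≤ (n - N : ℕ) * d := by positivity
    calc a (n + 1) ≤ (1 - β n) * a n + β n * c + d := hrec n hn
      _ ≤ (1 - β n) * ((∏ k ∈ Ico N n, (1 - β k)) * a N + c + (n - N : ℕ) * d) + β n * c + d := by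
        gcongr
      _ ≤ _ := by nlinarith

theorem norm_sub_le_of_modulus {E F : Type*} [NormedAddCommGroup E] [NormedSpace ℝ E]
    [SeminormedAddCommGroup F] {T : E → F} {ω : ℝ → ℝ} {M δ : ℝ} (hωpos : ∀ η > 0, 0 < ω η)
    (hω : ∀ η > 0, ∀ v w : E, ‖v‖ ≤ M → ‖w‖ ≤ M → ‖v - w‖ < ω η → ‖T v - T w‖ < η)
    (hδ : 0 < δ) {v w : E} (hv : ‖v‖ ≤ M) (hw : ‖w‖ ≤ M) (hvw : ‖v - w‖ ≤ ω δ) :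
    ‖T v - T w‖ ≤ δ := by
  rcases eq_or_ne v w with rfl | hne
  · simpa using hδ.le
  refine le_of_forall_pos_lt_add fun η hη => ?_
  have hr : 0 < ‖v - w‖ := norm_sub_pos_iff.2 hne
  -- pass through a point `q` of the segment that is `ω η`-close to `v`
  set s := min (ω η / (2 * ‖v - w‖)) 1
  have hs₀ : 0 < s := lt_min (div_pos (hωpos η hη) (by positivity)) one_pos
  have hs₁ : s ≤ 1 := min_le_right _ _
  have hsr : s * ‖v - w‖ < ω η := by
    calc s * ‖v - w‖ ≤ ω η / (2 * ‖v - w‖) * ‖v - w‖ := by gcongr; exact min_le_left _ _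
      _ = ω η / 2 := by field_simp
      _ < ω η := half_lt_self (hωpos η hη)
  set q := (1 - s) • v + s • w
  have hq : ‖q‖ ≤ M := mem_closedBall_zero_iff.1 <| convex_closedBall (0 : E) M
    (mem_closedBall_zero_iff.2 hv) (mem_closedBall_zero_iff.2 hw) (by linarith) hs₀.le (by ring)
  have hvq : ‖v - q‖ < ω η := by
    rwa [show v - q = s • (v - w) by module, norm_smul_of_nonneg hs₀.le]
  have hqw : ‖q - w‖ < ω δ := by
    rw [show q - w = (1 - s) • (v - w) by module, norm_smul_of_nonneg (by linarith)]
    nlinarith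
  calc ‖T v - T w‖ ≤ ‖T v - T q‖ + ‖T q - T w‖ := norm_sub_le_norm_sub_add_norm_sub _ _ _
    _ < η + δ := add_lt_add (hω η hη v q hv hq hvq) (hω δ hδ q w hq hw hqw)
    _ = δ + η := add_comm _ _

theorem norm_sub_le_of_forall_near {X : Type*} [SeminormedAddCommGroup X] {y : ℕ → X} {c : X}
    {n L : ℕ} {ρ η ε : ℝ} (hc : ∀ j ∈ Set.Icc (n + 1) L, ‖y j - c‖ ≤ ρ)
    (hn : ‖y (n + 1) - y n‖ ≤ η) (hε : 2 * ρ + η ≤ ε) (hε₀ : 0 ≤ ε) :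
    ∀ k ∈ Set.Icc n L, ∀ l ∈ Set.Icc n L, ‖y k - y l‖ ≤ ε := by
  have hη : 0 ≤ η := (norm_nonneg _).trans hn
  have key : ∀ k ∈ Set.Icc n L, ∀ l ∈ Set.Icc (n + 1) L, ‖y k - y l‖ ≤ ε := by
    rintro k ⟨hnk, hkL⟩ l hl
    have hcl : ‖c - y l‖ ≤ ρ := norm_sub_rev c (y l) ▸ hc l hl
    rcases hnk.eq_or_lt with rfl | hk
    · calc ‖y n - y l‖ ≤ ‖y n - y (n + 1)‖ + (‖y (n + 1) - c‖ + ‖c - y l‖) :=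
            (norm_sub_le_norm_sub_add_norm_sub _ _ _).trans
              (add_le_add le_rfl (norm_sub_le_norm_sub_add_norm_sub _ _ _))
        _ ≤ η + (ρ + ρ) := by
            rw [norm_sub_rev]
            exact add_le_add hn (add_le_add (hc _ ⟨le_rfl, hl.1.trans hl.2⟩) hcl)
        _ ≤ ε := by linarith
    · calc ‖y k - y l‖ ≤ ‖y k - c‖ + ‖c - y l‖ := norm_sub_le_norm_sub_add_norm_sub _ _ _
        _ ≤ ρ + ρ := add_le_add (hc k ⟨hk, hkL⟩) hcl
        _ ≤ ε := by linarith
  intro k hk l hl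
  rcases hl.1.eq_or_lt with rfl | hl'
  · rcases hk.1.eq_or_lt with rfl | hk'
    · simpa using hε₀
    · rw [norm_sub_rev]
      exact key _ hl k ⟨hk', hk.2⟩
  · exact key k hk l ⟨hl', hl.2⟩

theorem mapsTo_inter_closedBall {X : Type*} [SeminormedAddCommGroup X] {S : X → X} {C : Set X}
    {p : X} (hSC : Set.MapsTo S C C)
    (hS : ∀ v ∈ C, ∀ w ∈ C, ‖S v - S w‖ ≤ ‖v - w‖) (hp : p ∈ C) (hpS : S p = p) (r : ℝ) :
    Set.MapsTo S (C ∩ closedBall p r) (C ∩ closedBall p r) := fun v hv => by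
  have h := hS v hv.1 p hp
  rw [hpS, ← dist_eq_norm, ← dist_eq_norm] at h
  exact ⟨hSC hv.1, h.trans hv.2⟩

variable {X : Type*} [NormedAddCommGroup X] [NormedSpace ℝ X]

def IsDualitySelection (J : X → X →L[ℝ] ℝ) : Prop :=
  ∀ v : X, J v v = ‖v‖ ^ 2 ∧ ‖J v‖ ^ 2 = ‖v‖ ^ 2

variable {J : X → X →L[ℝ] ℝ} {S : X → X} {B : Set X} {u : X} {α : ℕ → ℝ} {x : ℕ → X} {M : ℝ}

theorem IsDualitySelection.norm_apply (hJ : IsDualitySelection J) (v : X) : ‖J v‖ = ‖v‖ :=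
  (sq_eq_sq₀ (norm_nonneg _) (norm_nonneg _)).1 (hJ v).2

theorem IsDualitySelection.apply_le (hJ : IsDualitySelection J) (v w : X) :
    J v w ≤ ‖v‖ * ‖w‖ :=
  (le_abs_self _).trans <| ((J v).le_opNorm w).trans_eq <| by rw [hJ.norm_apply]

theorem IsDualitySelection.norm_add_sq_le (hJ : IsDualitySelection J) (a b : X) :
    ‖a + b‖ ^ 2 ≤ ‖a‖ ^ 2 + 2 * J (a + b) b := by
  have h : ‖a + b‖ ^ 2 = J (a + b) a + J (a + b) b := by rw [← (hJ (a + b)).1, map_add]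
  nlinarith [hJ.apply_le (a + b) a, sq_nonneg (‖a + b‖ - ‖a‖)]

theorem IsDualitySelection.apply_le_apply_add (hJ : IsDualitySelection J) (a c y y' : X) :
    J a y ≤ J c y' + ‖J a - J c‖ * ‖y'‖ + ‖a‖ * ‖y - y'‖ := by
  have h : J a y = J c y' + (J a - J c) y' + J a (y - y') := by
    simp only [FunLike.coe_sub, Pi.sub_apply, map_sub]; ring
  have h₁ : (J a - J c) y' ≤ ‖J a - J c‖ * ‖y'‖ := (le_abs_self _).trans ((J a - J c).le_opNorm y')
  linarith [hJ.apply_le a (y - y')]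

/-- Accretivity of `id - S` for a nonexpansive `S`. -/
theorem IsDualitySelection.apply_sub_le_of_nonexpansive (hJ : IsDualitySelection J)
    (hS : ∀ v ∈ B, ∀ w ∈ B, ‖S v - S w‖ ≤ ‖v - w‖)
    {v w : X} (hv : v ∈ B) (hw : w ∈ B) :
    J (v - w) (w - S w) ≤ ‖v - w‖ * ‖v - S v‖ := by
  have h : w - S w = (v - S v) - (v - w) + (S v - S w) := by abel
  have h₁ := hJ.apply_le (v - w) (S v - S w)
  have h₂ := mul_le_mul_of_nonneg_left (hS v hv w hw) (norm_nonneg (v - w))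
  rw [h, map_add, map_sub, (hJ _).1]
  nlinarith [hJ.apply_le (v - w) (v - S v)]

theorem halpern_mem {D : Set X} (hD : Convex ℝ D) (hSD : Set.MapsTo S D D) (hu : u ∈ D)
    (hx₀ : x 0 ∈ D) (hα : ∀ n, α n ∈ Set.Icc (0 : ℝ) 1)
    (hx : ∀ n, x (n + 1) = α n • u + (1 - α n) • S (x n)) (n : ℕ) : x n ∈ D := by
  induction n with
  | zero => exact hx₀
  | succ n ih => rw [hx n]; exact hD hu (hSD ih) (hα n).1 (sub_nonneg.2 (hα n).2) (by ring)

theorem resolvent_sub_eq {z : X} {m : ℝ} (hz : z = (1 / m) • u + (1 - 1 / m) • S z) :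
    z - S z = (1 / m) • (u - S z) := by
  nth_rewrite 1 [hz]; module

theorem sub_resolvent_eq {z : X} {m : ℝ} (hm : m ≠ 0) (hz : z = (1 / m) • u + (1 - 1 / m) • S z) :
    u - z = (m - 1) • (z - S z) := by
  rw [resolvent_sub_eq hz, smul_smul]
  nth_rewrite 1 [hz]
  match_scalars <;> field_simp

theorem resolvent_mem_closedBall {C : Set X} {p z : X} {m r : ℝ} (hm : 1 ≤ m)
    (hS : ∀ v ∈ C, ∀ w ∈ C, ‖S v - S w‖ ≤ ‖v - w‖) (hp : p ∈ C) (hpS : S p = p) (hzC : z ∈ C)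
    (hz : z = (1 / m) • u + (1 - 1 / m) • S z) (hu : u ∈ closedBall p r) :
    z ∈ closedBall p r := by
  have ht₀ : 0 < 1 / m := by positivity
  have ht₁ : 1 / m ≤ 1 := by rw [div_le_one (by linarith)]; exact hm
  have hsplit : z - p = (1 / m) • (u - p) + (1 - 1 / m) • (S z - S p) := by
    rw [hpS]; nth_rewrite 1 [hz]; module
  have h : ‖z - p‖ ≤ 1 / m * ‖u - p‖ + (1 - 1 / m) * ‖z - p‖ := by
    calc ‖z - p‖ ≤ ‖(1 / m) • (u - p)‖ + ‖(1 - 1 / m) • (S z - S p)‖ := hsplit ▸ norm_add_le _ _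
      _ ≤ _ := by
        rw [norm_smul_of_nonneg ht₀.le, norm_smul_of_nonneg (sub_nonneg.2 ht₁)]
        gcongr
        exact hS z hzC p hp
  rw [mem_closedBall, dist_eq_norm] at hu ⊢
  nlinarith

theorem exists_invariant_set_halpern_resolvent {C : Set X} {p : X} {z : ℕ → X} {M : ℝ}
    (hC : Convex ℝ C) (hSC : Set.MapsTo S C C) (hS : ∀ v ∈ C, ∀ w ∈ C, ‖S v - S w‖ ≤ ‖v - w‖)
    (hp : p ∈ C) (hpS : S p = p) (hu : u ∈ C) (hx₀ : x 0 ∈ C)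
    (hbound : 2 * max ‖p - x 0‖ ‖p - u‖ ≤ M) (hα : ∀ n, α n ∈ Set.Icc (0 : ℝ) 1)
    (hx : ∀ n, x (n + 1) = α n • u + (1 - α n) • S (x n)) (hzC : ∀ m : ℕ, 1 ≤ m → z m ∈ C)
    (hz : ∀ m : ℕ, 1 ≤ m → z m = (1 / m : ℝ) • u + (1 - 1 / m : ℝ) • S (z m)) :
    ∃ B : Set X, (∀ v ∈ B, ∀ w ∈ B, ‖S v - S w‖ ≤ ‖v - w‖) ∧ Set.MapsTo S B B ∧
      (∀ v ∈ B, ∀ w ∈ B, ‖v - w‖ ≤ M) ∧ u ∈ B ∧ (∀ n, x n ∈ B) ∧ ∀ m, 1 ≤ m → z m ∈ B := by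
  have huB : u ∈ C ∩ closedBall p (M / 2) :=
    ⟨hu, mem_closedBall'.2 <| by rw [dist_eq_norm]; linarith [le_max_right ‖p - x 0‖ ‖p - u‖]⟩
  refine ⟨C ∩ closedBall p (M / 2), fun v hv w hw => hS v hv.1 w hw.1,
    mapsTo_inter_closedBall hSC hS hp hpS _, fun v hv w hw => ?_, huB,
    halpern_mem (hC.inter (convex_closedBall _ _)) (mapsTo_inter_closedBall hSC hS hp hpS _) huB
      ⟨hx₀, mem_closedBall'.2 <| by rw [dist_eq_norm]; linarith [le_max_left ‖p - x 0‖ ‖p - u‖]⟩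
      hα hx,
    fun m hm => ⟨hzC m hm, resolvent_mem_closedBall (by exact_mod_cast hm) hS hp hpS (hzC m hm)
      (hz m hm) huB.2⟩⟩
  rw [← dist_eq_norm]
  linarith [dist_triangle_right v w p, mem_closedBall.1 hv.2, mem_closedBall.1 hw.2]

theorem IsDualitySelection.apply_sub_resolvent_le (hJ : IsDualitySelection J)
    (hS : ∀ v ∈ B, ∀ w ∈ B, ‖S v - S w‖ ≤ ‖v - w‖) {v z : X} (hv : v ∈ B) (hzB : z ∈ B)
    {m : ℝ} (hm : 1 ≤ m) (hz : z = (1 / m) • u + (1 - 1 / m) • S z) :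
    J (v - z) (u - z) ≤ (m - 1) * (‖v - z‖ * ‖v - S v‖) := by
  rw [sub_resolvent_eq (by positivity) hz, map_smul, smul_eq_mul]
  exact mul_le_mul_of_nonneg_left (hJ.apply_sub_le_of_nonexpansive hS hv hzB) (sub_nonneg.2 hm)

theorem norm_halpern_sub_le (hα : ∀ n, α n ∈ Set.Icc (0 : ℝ) 1)
    (hx : ∀ n, x (n + 1) = α n • u + (1 - α n) • S (x n)) (n : ℕ) :
    ‖x n - S (x n)‖ ≤ ‖x (n + 1) - x n‖ + α n * ‖u - S (x n)‖ := by
  have h : x n - S (x n) = -(x (n + 1) - x n) + α n • (u - S (x n)) := by rw [hx n]; module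
  rw [h, ← norm_smul_of_nonneg (hα n).1, ← norm_neg (x (n + 1) - x n)]
  exact norm_add_le _ _

theorem norm_halpern_succ_succ_sub_le (hS : ∀ v ∈ B, ∀ w ∈ B, ‖S v - S w‖ ≤ ‖v - w‖)
    (hxB : ∀ n, x n ∈ B) (hα : ∀ n, α n ∈ Set.Icc (0 : ℝ) 1)
    (hx : ∀ n, x (n + 1) = α n • u + (1 - α n) • S (x n)) (k : ℕ) :
    ‖x (k + 1 + 1) - x (k + 1)‖ ≤
      (1 - α (k + 1)) * ‖x (k + 1) - x k‖ + |α (k + 1) - α k| * ‖u - S (x k)‖ := by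
  have h : x (k + 1 + 1) - x (k + 1) =
      (α (k + 1) - α k) • (u - S (x k)) + (1 - α (k + 1)) • (S (x (k + 1)) - S (x k)) := by
    rw [hx (k + 1), hx k]; module
  rw [h, add_comm ((1 - α (k + 1)) * _)]
  refine (norm_add_le _ _).trans ?_
  rw [norm_smul, Real.norm_eq_abs, norm_smul_of_nonneg (sub_nonneg.2 (hα _).2)]
  gcongr
  · exact sub_nonneg.2 (hα _).2
  · exact hS _ (hxB _) _ (hxB _)

theorem IsDualitySelection.norm_halpern_sub_sq_le (hJ : IsDualitySelection J)
    (hS : ∀ v ∈ B, ∀ w ∈ B, ‖S v - S w‖ ≤ ‖v - w‖) (hxB : ∀ n, x n ∈ B)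
    (hα : ∀ n, α n ∈ Set.Icc (0 : ℝ) 1) (hx : ∀ n, x (n + 1) = α n • u + (1 - α n) • S (x n))
    {z : X} (hzB : z ∈ B) (i : ℕ) :
    ‖x (i + 1) - z‖ ^ 2 ≤ (1 - α i) * ‖x i - z‖ ^ 2 +
      2 * (α i * J (x (i + 1) - z) (u - z) + ‖x (i + 1) - z‖ * ‖S z - z‖) := by
  obtain ⟨hα₀, hα₁⟩ := hα i
  have hsplit : x (i + 1) - z =
      (1 - α i) • (S (x i) - S z) + (α i • (u - z) + (1 - α i) • (S z - z)) := by
    rw [hx i]; module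
  have h := hJ.norm_add_sq_le ((1 - α i) • (S (x i) - S z)) (α i • (u - z) + (1 - α i) • (S z - z))
  rw [← hsplit, map_add, map_smul, map_smul, smul_eq_mul, smul_eq_mul] at h
  have hSx : ‖(1 - α i) • (S (x i) - S z)‖ ^ 2 ≤ (1 - α i) * ‖x i - z‖ ^ 2 := by
    rw [norm_smul_of_nonneg (sub_nonneg.2 hα₁), mul_pow]
    have hSS := pow_le_pow_left₀ (norm_nonneg _) (hS _ (hxB i) _ hzB) 2
    calc (1 - α i) ^ 2 * ‖S (x i) - S z‖ ^ 2 ≤ (1 - α i) * ‖S (x i) - S z‖ ^ 2 := by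
          gcongr; nlinarith
      _ ≤ (1 - α i) * ‖x i - z‖ ^ 2 := by gcongr
  have hSz : (1 - α i) * J (x (i + 1) - z) (S z - z) ≤ ‖x (i + 1) - z‖ * ‖S z - z‖ :=
    (mul_le_mul_of_nonneg_left (hJ.apply_le _ _) (sub_nonneg.2 hα₁)).trans
      (mul_le_of_le_one_left (by positivity) (sub_le_self _ hα₀))
  linarith

theorem norm_halpern_succ_sub_le (hS : ∀ v ∈ B, ∀ w ∈ B, ‖S v - S w‖ ≤ ‖v - w‖)
    (hSB : Set.MapsTo S B B) (hB : ∀ v ∈ B, ∀ w ∈ B, ‖v - w‖ ≤ M) (hu : u ∈ B)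
    (hxB : ∀ n, x n ∈ B) (hα : ∀ n, α n ∈ Set.Icc (0 : ℝ) 1)
    (hx : ∀ n, x (n + 1) = α n • u + (1 - α n) • S (x n))
    {η e : ℝ} (hη : 0 ≤ η) (he : 0 < e) {N₂ N₃ : ℕ}
    (hN₃ : ∀ n, N₃ ≤ n → |α n - α (n - 1)| ≤ η * α n)
    (heN₃ : e ≤ ∏ k ∈ range (N₃ + 1), (1 - α k))
    (hN₂ : ∏ k ∈ range (N₂ + 1), (1 - α k) ≤ e * η) {n : ℕ} (hn₂ : N₂ ≤ n) (hn₃ : N₃ ≤ n) :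
    ‖x (n + 1) - x n‖ ≤ 2 * η * M := by
  have hM : 0 ≤ M := (norm_nonneg _).trans (hB u hu u hu)
  have hrec : ∀ k, N₃ ≤ k → ‖x (k + 1 + 1) - x (k + 1)‖ ≤
      (1 - α (k + 1)) * ‖x (k + 1) - x k‖ + α (k + 1) * (η * M) + 0 := by
    intro k hk
    calc ‖x (k + 1 + 1) - x (k + 1)‖
        ≤ (1 - α (k + 1)) * ‖x (k + 1) - x k‖ + |α (k + 1) - α k| * ‖u - S (x k)‖ :=
          norm_halpern_succ_succ_sub_le hS hxB hα hx k
      _ ≤ (1 - α (k + 1)) * ‖x (k + 1) - x k‖ + η * α (k + 1) * M :=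
          add_le_add le_rfl (mul_le_mul (hN₃ (k + 1) (by omega)) (hB _ hu _ (hSB (hxB k)))
            (norm_nonneg _) (mul_nonneg hη (hα _).1))
      _ = _ := by ring
  have hprod : ∏ k ∈ Ico N₃ n, (1 - α (k + 1)) ≤ η := by
    rw [prod_Ico_add' (fun k => 1 - α k)]
    exact prod_Ico_le_of_prod_range_le_s5 (fun k => sub_nonneg.2 (hα k).2) (by omega) he heN₃
      ((antitone_prod_range_one_sub hα (by omega : N₂ + 1 ≤ n + 1)).trans hN₂)
  calc ‖x (n + 1) - x n‖
      ≤ (∏ k ∈ Ico N₃ n, (1 - α (k + 1))) * ‖x (N₃ + 1) - x N₃‖ + η * M + (n - N₃ : ℕ) * 0 :=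
        le_prod_mul_add_of_recursion (a := fun k => ‖x (k + 1) - x k‖) (mul_nonneg hη hM) le_rfl
          (fun k => hα (k + 1)) hrec hn₃
    _ ≤ η * M + η * M + (n - N₃ : ℕ) * 0 := by
        gcongr
        exact hB _ (hxB _) _ (hxB _)
    _ = 2 * η * M := by ring

theorem halpern_asymptotic_regularity_s5 (hS : ∀ v ∈ B, ∀ w ∈ B, ‖S v - S w‖ ≤ ‖v - w‖)
    (hSB : Set.MapsTo S B B) (hB : ∀ v ∈ B, ∀ w ∈ B, ‖v - w‖ ≤ M) (hu : u ∈ B)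
    (hxB : ∀ n, x n ∈ B) (hα : ∀ n, α n ∈ Set.Icc (0 : ℝ) 1)
    (hx : ∀ n, x (n + 1) = α n • u + (1 - α n) • S (x n)) {R₁ R₂ R₃ : ℝ → ℕ} {E : ℕ → ℝ}
    (hR₁ : ∀ ε > (0 : ℝ), ∀ n, R₁ ε ≤ n → α n ≤ ε)
    (hR₂ : ∀ ε > (0 : ℝ), ∏ k ∈ range (R₂ ε + 1), (1 - α k) ≤ ε)
    (hR₃ : ∀ ε > (0 : ℝ), ∀ n, R₃ ε ≤ n → |α n - α (n - 1)| ≤ ε * α n)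
    (hE : ∀ k : ℕ, 0 < E k ∧ E k ≤ ∏ n ∈ range (k + 1), (1 - α n))
    (hM : 0 < M) {ε : ℝ} (hε : 0 < ε) {n : ℕ}
    (hn : max (R₁ (ε / (2 * M)))
      (max (R₂ (ε * E (R₃ (ε / 2 / (3 * M))) / (6 * M))) (R₃ (ε / (6 * M)))) ≤ n) :
    ‖x n - S (x n)‖ ≤ 5 * ε / 6 ∧ ‖x (n + 1) - x n‖ ≤ ε / 3 := by
  -- `hn` is `ψ ε ≤ n` with `D (ε / 2) = E (R₃ (ε / 2 / (3 * M)))` unfolded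
  rw [show ε / 2 / (3 * M) = ε / (6 * M) by ring] at hn
  simp only [max_le_iff] at hn
  obtain ⟨hn₁, hn₂, hn₃⟩ := hn
  obtain ⟨hE₀, hE₁⟩ := hE (R₃ (ε / (6 * M)))
  have hstep : ‖x (n + 1) - x n‖ ≤ ε / 3 :=
    (norm_halpern_succ_sub_le hS hSB hB hu hxB hα hx (by positivity) hE₀ (hR₃ _ (by positivity))
      hE₁ ((hR₂ _ (div_pos (mul_pos hε hE₀) (by positivity))).trans_eq (by ring)) hn₂
      hn₃).trans_eq (by field_simp; ring)
  refine ⟨(norm_halpern_sub_le hα hx n).trans ?_, hstep⟩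
  calc ‖x (n + 1) - x n‖ + α n * ‖u - S (x n)‖ ≤ ε / 3 + ε / (2 * M) * M := by
        gcongr
        · exact hR₁ _ (by positivity) n hn₁
        · exact hB _ hu _ (hSB (hxB n))
    _ = 5 * ε / 6 := by field_simp; ring

theorem IsDualitySelection.apply_sub_resolvent_le_of_close (hJ : IsDualitySelection J)
    (hS : ∀ v ∈ B, ∀ w ∈ B, ‖S v - S w‖ ≤ ‖v - w‖) (hB : ∀ v ∈ B, ∀ w ∈ B, ‖v - w‖ ≤ M)
    (hu : u ∈ B) {ω : ℝ → ℝ} (hωpos : ∀ η > 0, 0 < ω η)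
    (hω : ∀ η > 0, ∀ v w : X, ‖v‖ ≤ M → ‖w‖ ≤ M → ‖v - w‖ < ω η → ‖J v - J w‖ < η)
    {v z z' : X} (hv : v ∈ B) (hzB : z ∈ B) (hz'B : z' ∈ B) {m : ℝ} (hm : 1 ≤ m)
    (hz : z = (1 / m) • u + (1 - 1 / m) • S z) {δ : ℝ} (hδ : 0 < δ)
    (hzz : ‖z - z'‖ ≤ min δ (ω δ)) :
    J (v - z') (u - z') ≤ m * M * ‖v - S v‖ + 2 * M * δ := by
  have h := hJ.apply_le_apply_add (v - z') (v - z) (u - z') (u - z)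
  rw [show u - z' - (u - z) = z - z' by abel] at h
  have hM : 0 ≤ M := (norm_nonneg _).trans (hB u hu u hu)
  have hJzz : ‖J (v - z') - J (v - z)‖ ≤ δ := norm_sub_le_of_modulus hωpos hω hδ (hB _ hv _ hz'B)
    (hB _ hv _ hzB) (by rw [sub_sub_sub_cancel_left]; exact hzz.trans (min_le_right _ _))
  have h₁ : J (v - z) (u - z) ≤ m * M * ‖v - S v‖ :=
    (hJ.apply_sub_resolvent_le hS hv hzB hm hz).trans <| by
      rw [mul_assoc]
      exact mul_le_mul (by linarith) (mul_le_mul_of_nonneg_right (hB _ hv _ hzB) (norm_nonneg _))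
        (by positivity) (by linarith)
  have h₂ : ‖J (v - z') - J (v - z)‖ * ‖u - z‖ ≤ δ * M :=
    mul_le_mul hJzz (hB _ hu _ hzB) (norm_nonneg _) hδ.le
  have h₃ : ‖v - z'‖ * ‖z - z'‖ ≤ M * δ :=
    mul_le_mul (hB _ hv _ hz'B) (hzz.trans (min_le_left _ _)) (norm_nonneg _) hM
  linarith

theorem IsDualitySelection.norm_halpern_sub_resolvent_sq_le (hJ : IsDualitySelection J)
    (hS : ∀ v ∈ B, ∀ w ∈ B, ‖S v - S w‖ ≤ ‖v - w‖) (hSB : Set.MapsTo S B B)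
    (hB : ∀ v ∈ B, ∀ w ∈ B, ‖v - w‖ ≤ M) (hu : u ∈ B) (hxB : ∀ n, x n ∈ B)
    (hα : ∀ n, α n ∈ Set.Icc (0 : ℝ) 1) (hx : ∀ n, x (n + 1) = α n • u + (1 - α n) • S (x n))
    {z : X} (hzB : z ∈ B) {m : ℝ} (hm : 0 ≤ m) (hz : z = (1 / m) • u + (1 - 1 / m) • S z)
    {N : ℕ} {γ : ℝ} (hγ : 0 ≤ γ) (hJN : ∀ i, N ≤ i → J (x (i + 1) - z) (u - z) ≤ γ)
    {i : ℕ} (hi : N ≤ i) :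
    ‖x i - z‖ ^ 2 ≤
      (∏ k ∈ Ico N i, (1 - α k)) * M ^ 2 + 2 * γ + (i - N : ℕ) * (2 * M ^ 2 / m) := by
  have hM : 0 ≤ M := (norm_nonneg _).trans (hB u hu u hu)
  have hSz : ‖S z - z‖ ≤ M / m := by
    rw [norm_sub_rev, resolvent_sub_eq hz, norm_smul_of_nonneg (by positivity), one_div_mul_eq_div]
    gcongr
    exact hB _ hu _ (hSB hzB)
  have hrec : ∀ k, N ≤ k → ‖x (k + 1) - z‖ ^ 2 ≤
      (1 - α k) * ‖x k - z‖ ^ 2 + α k * (2 * γ) + 2 * M ^ 2 / m := by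
    intro k hk
    have h₁ := hJ.norm_halpern_sub_sq_le hS hxB hα hx hzB k
    have h₂ := mul_le_mul_of_nonneg_left (hJN k hk) (hα k).1
    have h₃ : ‖x (k + 1) - z‖ * ‖S z - z‖ ≤ M * (M / m) :=
      mul_le_mul (hB _ (hxB _) _ hzB) hSz (norm_nonneg _) hM
    rw [mul_div_assoc', ← sq] at h₃
    linarith [show 2 * M ^ 2 / m = 2 * (M ^ 2 / m) by ring]
  calc ‖x i - z‖ ^ 2
      ≤ (∏ k ∈ Ico N i, (1 - α k)) * ‖x N - z‖ ^ 2 + 2 * γ + (i - N : ℕ) * (2 * M ^ 2 / m) :=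
        le_prod_mul_add_of_recursion (a := fun k => ‖x k - z‖ ^ 2) (by positivity) (by positivity)
          hα hrec hi
    _ ≤ _ := by
        gcongr
        · exact prod_nonneg fun k _ => sub_nonneg.2 (hα k).2
        · exact hB _ (hxB N) _ hzB

theorem IsDualitySelection.norm_halpern_sub_resolvent_le (hJ : IsDualitySelection J)
    (hS : ∀ v ∈ B, ∀ w ∈ B, ‖S v - S w‖ ≤ ‖v - w‖) (hSB : Set.MapsTo S B B)
    (hB : ∀ v ∈ B, ∀ w ∈ B, ‖v - w‖ ≤ M) (hu : u ∈ B) (hxB : ∀ n, x n ∈ B)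
    (hα : ∀ n, α n ∈ Set.Icc (0 : ℝ) 1) (hx : ∀ n, x (n + 1) = α n • u + (1 - α n) • S (x n))
    (hM : 0 < M) {z : X} (hzB : z ∈ B) {m : ℝ} (hz : z = (1 / m) • u + (1 - 1 / m) • S z)
    {ε : ℝ} (hε : 0 ≤ ε) {N R L : ℕ}
    (hγ : ∀ i, N ≤ i → J (x (i + 1) - z) (u - z) ≤ 11 * ε ^ 2 / 432)
    {e : ℝ} (he : 0 < e) (heN : e ≤ ∏ k ∈ range (N + 1), (1 - α k))
    (hR : ∏ k ∈ range (R + 1), (1 - α k) ≤ e * ε ^ 2 / (12 * M ^ 2)) (hNR : N < R)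
    (hm : 72 * M ^ 2 ≤ m * ε ^ 2) (hL : 24 * M ^ 2 * ((L : ℝ) - N - 1) ≤ m * ε ^ 2) :
    ∀ i ∈ Set.Icc (R + 1) L, ‖x i - z‖ ≤ 149 / 300 * ε := by
  rintro i ⟨hi₁, hi₂⟩
  have hm₀ : 0 < m := pos_of_mul_pos_left ((by positivity : (0 : ℝ) < 72 * M ^ 2).trans_le hm)
    (sq_nonneg ε)
  have hsq := hJ.norm_halpern_sub_resolvent_sq_le hS hSB hB hu hxB hα hx hzB hm₀.le hz
    (by positivity) hγ (i := i) (by omega)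
  have hP : ∏ k ∈ Ico N i, (1 - α k) ≤ ε ^ 2 / (12 * M ^ 2) :=
    prod_Ico_le_of_prod_range_le_s5 (fun k => sub_nonneg.2 (hα k).2) (by omega) he
      (heN.trans (antitone_prod_range_one_sub hα (Nat.le_succ N)))
      ((antitone_prod_range_one_sub hα hi₁).trans (hR.trans_eq (by ring)))
  have hcount : ((i - N : ℕ) : ℝ) * (2 * M ^ 2 / m) ≤ ε ^ 2 / 9 := by
    have hiL : (i : ℝ) ≤ L := by exact_mod_cast hi₂
    rw [Nat.cast_sub (by omega), mul_div_assoc', div_le_iff₀ hm₀]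
    nlinarith [mul_le_mul_of_nonneg_left hiL (sq_nonneg M)]
  -- `ε² / 12 + 11 ε² / 216 + ε² / 9 = 53 ε² / 216 ≤ (149 ε / 300)²`
  have hsq' : ‖x i - z‖ ^ 2 ≤ (149 / 300 * ε) ^ 2 := by
    calc ‖x i - z‖ ^ 2
        ≤ ε ^ 2 / (12 * M ^ 2) * M ^ 2 + 2 * (11 * ε ^ 2 / 432) + ε ^ 2 / 9 := by
          refine hsq.trans ?_; gcongr
      _ ≤ (149 / 300 * ε) ^ 2 := by field_simp; nlinarith
  exact (pow_le_pow_iff_left₀ (norm_nonneg _) (by positivity) two_ne_zero).1 hsq'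

theorem IsDualitySelection.halpern_metastable_of_resolvent_close (hJ : IsDualitySelection J)
    (hS : ∀ v ∈ B, ∀ w ∈ B, ‖S v - S w‖ ≤ ‖v - w‖) (hSB : Set.MapsTo S B B)
    (hB : ∀ v ∈ B, ∀ w ∈ B, ‖v - w‖ ≤ M) (hu : u ∈ B) (hxB : ∀ n, x n ∈ B)
    (hα : ∀ n, α n ∈ Set.Icc (0 : ℝ) 1) (hx : ∀ n, x (n + 1) = α n • u + (1 - α n) • S (x n))
    {ω : ℝ → ℝ} (hωpos : ∀ η > 0, 0 < ω η)
    (hω : ∀ η > 0, ∀ v w : X, ‖v‖ ≤ M → ‖w‖ ≤ M → ‖v - w‖ < ω η → ‖J v - J w‖ < η)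
    {z : ℕ → X} (hzB : ∀ m, 1 ≤ m → z m ∈ B)
    (hz : ∀ m : ℕ, 1 ≤ m → z m = (1 / m : ℝ) • u + (1 - 1 / m : ℝ) • S (z m))
    {ε : ℝ} (hε : 0 < ε) (hεM : ε < M) {m m' N R L : ℕ} (hm : 72 * M ^ 2 / ε ^ 2 ≤ m)
    (hmm' : m ≤ m') (hzz : ‖z m - z m'‖ ≤ min (ε ^ 2 / (144 * M)) (ω (ε ^ 2 / (144 * M))))
    (hN : ∀ i, N ≤ i → ‖x i - S (x i)‖ ≤ 5 * (ε ^ 2 / (72 * M * m)) / 6 ∧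
      ‖x (i + 1) - x i‖ ≤ ε ^ 2 / (72 * M * m) / 3)
    {e : ℝ} (he : 0 < e) (heN : e ≤ ∏ k ∈ range (N + 1), (1 - α k))
    (hR : ∏ k ∈ range (R + 1), (1 - α k) ≤ e * ε ^ 2 / (12 * M ^ 2))
    (hL : 24 * M ^ 2 * ((L : ℝ) - N - 1) / ε ^ 2 ≤ m') :
    ∀ k ∈ Set.Icc R L, ∀ l ∈ Set.Icc R L, ‖x k - x l‖ ≤ ε := by
  have hM : 0 < M := hε.trans hεM
  have hmR : 1 ≤ (m : ℝ) := le_trans (by rw [le_div_iff₀ (by positivity)]; nlinarith) hm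
  have hm₁ : 1 ≤ m := by exact_mod_cast hmR
  have hm'₁ : 1 ≤ m' := hm₁.trans hmm'
  have hγ : ∀ i, N ≤ i → J (x (i + 1) - z m') (u - z m') ≤ 11 * ε ^ 2 / 432 := fun i hi =>
    calc J (x (i + 1) - z m') (u - z m')
        ≤ m * M * ‖x (i + 1) - S (x (i + 1))‖ + 2 * M * (ε ^ 2 / (144 * M)) :=
          hJ.apply_sub_resolvent_le_of_close hS hB hu hωpos hω (hxB _) (hzB m hm₁) (hzB m' hm'₁)
            hmR (hz m hm₁) (by positivity) hzz
      _ ≤ m * M * (5 * (ε ^ 2 / (72 * M * m)) / 6) + 2 * M * (ε ^ 2 / (144 * M)) := by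
          gcongr; exact (hN (i + 1) (by omega)).1
      _ = 11 * ε ^ 2 / 432 := by field_simp; ring
  have hNR : N < R := lt_of_prod_range_le hα he heN (t := ε ^ 2 / (12 * M ^ 2))
    (hR.trans_eq (by ring))
    (by rw [div_lt_one (by positivity)]; nlinarith)
  have hstep : ‖x (R + 1) - x R‖ ≤ ε / 150 := by
    refine (hN R hNR.le).2.trans ?_
    have hεm : ε ≤ M * m := hεM.le.trans (le_mul_of_one_le_right hM.le hmR)
    rw [div_div, div_le_div_iff₀ (by positivity) (by norm_num)]
    nlinarith [mul_le_mul_of_nonneg_left hεm hε.le]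
  refine norm_sub_le_of_forall_near (hJ.norm_halpern_sub_resolvent_le hS hSB hB hu hxB hα hx hM
    (hzB m' hm'₁) (hz m' hm'₁) hε.le hγ he heN hR hNR ?_ ?_) hstep (by linarith) hε.le
  · rw [← div_le_iff₀ (by positivity)]; exact hm.trans (by exact_mod_cast hmm')
  · rwa [← div_le_iff₀ (by positivity)]

end

open Finset in
theorem halpern_metastability_general
    {X : Type*} [NormedAddCommGroup X] [NormedSpace ℝ X]
    (J : X → X →L[ℝ] ℝ)
    (hJ : ∀ v : X, J v v = ‖v‖ ^ 2 ∧ ‖J v‖ ^ 2 = ‖v‖ ^ 2)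
    (ω : ℝ → ℝ → ℝ)
    (hωpos : ∀ M' > (0 : ℝ), ∀ ε' > (0 : ℝ), 0 < ω M' ε')
    (hω : ∀ M' > (0 : ℝ), ∀ ε' > (0 : ℝ), ∀ v w : X,
      ‖v‖ ≤ M' → ‖w‖ ≤ M' → ‖v - w‖ < ω M' ε' → ‖J v - J w‖ < ε')
    (C : Set X) (hCconv : Convex ℝ C)
    (S : X → X) (hSmaps : Set.MapsTo S C C)
    (hSne : ∀ v ∈ C, ∀ w ∈ C, ‖S v - S w‖ ≤ ‖v - w‖)
    (p : X) (hp : p ∈ C) (hpfix : S p = p)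
    (u x₀ : X) (hu : u ∈ C) (hx₀ : x₀ ∈ C)
    (M : ℝ) (hM : 0 < M)
    (hbound : 2 * max ‖p - x₀‖ ‖p - u‖ ≤ M)
    (z : ℕ → X) (hzC : ∀ m : ℕ, 1 ≤ m → z m ∈ C)
    (hz : ∀ m : ℕ, 1 ≤ m →
      z m = (1 / m : ℝ) • u + (1 - 1 / m : ℝ) • S (z m))
    (K : ℝ → (ℕ → ℕ) → ℕ)
    (hK : ∀ ε > (0 : ℝ), ∀ g : ℕ → ℕ, ∃ n ≤ K ε g,
      ∀ k ∈ Set.Icc n (n + g n), ∀ l ∈ Set.Icc n (n + g n), ‖z k - z l‖ ≤ ε)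
    (α : ℕ → ℝ) (hα : ∀ n, α n ∈ Set.Ioo (0 : ℝ) 1)
    (R₁ R₂ R₃ : ℝ → ℕ)
    (hR₁ : ∀ ε > (0 : ℝ), ∀ n, R₁ ε ≤ n → α n ≤ ε)
    (hR₂ : ∀ ε > (0 : ℝ), ∏ k ∈ Finset.range (R₂ ε + 1), (1 - α k) ≤ ε)
    (hR₃ : ∀ ε > (0 : ℝ), ∀ n, R₃ ε ≤ n → |α n - α (n - 1)| ≤ ε * α n)
    (E : ℕ → ℝ)
    (hE : ∀ k : ℕ, 0 < E k ∧ E k ≤ ∏ n ∈ Finset.range (k + 1), (1 - α n))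
    (x : ℕ → X) (hx0 : x 0 = x₀)
    (hx : ∀ n, x (n + 1) = α n • u + (1 - α n) • S (x n)) :
    ∀ ε > (0 : ℝ), ∀ g : ℕ → ℕ,
      let δ : ℝ := ε ^ 2 / (144 * M)
      let ε₀ : ℝ := min δ (ω M δ)
      let D : ℝ → ℝ := fun ε' => E (R₃ (ε' / (3 * M)))
      let ψ : ℝ → ℕ := fun ε' =>
        max (R₁ (ε' / (2 * M)))
          (max (R₂ (ε' * D (ε' / 2) / (6 * M))) (R₃ (ε' / (6 * M))))
      let φ : ℕ → ℕ := fun k => ψ (ε ^ 2 / (72 * M * k))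
      let m₀ : ℕ := ⌈72 * M ^ 2 / ε ^ 2⌉₊
      let gs : ℕ → ℕ := fun k => k + g k
      let Et : ℕ → ℝ := fun k => E (φ k)
      let f : ℕ → ℕ := fun k =>
        ⌈max (24 * M ^ 2 *
            ((max ((gs (R₂ (Et k * ε ^ 2 / (12 * M ^ 2)))) : ℝ) ((φ k : ℝ) + 1)
              - (φ k : ℝ) - 1)) / ε ^ 2 - (k : ℝ)) 0⌉₊
      let fs : ℕ → ℕ := fun k => f (k + m₀) + m₀
      let Γ : ℕ := (Finset.Icc m₀ (K ε₀ fs + m₀)).sup φ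
      let Γt : ℕ := sInf (φ '' Set.Icc m₀ (K ε₀ fs + m₀))
      let Sig : ℕ := (Finset.Icc Γt Γ).sup
        (fun k => max (R₂ (E k * ε ^ 2 / (12 * M ^ 2))) (k + 1))
      ∃ n ≤ Sig, ∀ k ∈ Set.Icc n (n + g n), ∀ l ∈ Set.Icc n (n + g n),
        ‖x k - x l‖ ≤ ε := by
  intro ε hε g δ ε₀ D ψ φ m₀ gs Et f fs Γ Γt Sig
  have hα' : ∀ n, α n ∈ Set.Icc (0 : ℝ) 1 := fun n => Set.Ioo_subset_Icc_self (hα n)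
  obtain ⟨B, hS, hSB, hB, huB, hxB, hzB⟩ := exists_invariant_set_halpern_resolvent hCconv hSmaps
    hSne hp hpfix hu (hx0 ▸ hx₀) (hx0 ▸ hbound) hα' hx hzC hz
  rcases le_or_gt M ε with hMε | hεM
  · exact ⟨0, Nat.zero_le _, fun k _ l _ => (hB _ (hxB k) _ (hxB l)).trans hMε⟩
  have hδ : 0 < δ := by positivity
  obtain ⟨n₀, hn₀K, hn₀⟩ := hK ε₀ (lt_min hδ (hωpos M hM δ hδ)) fs
  set m := n₀ + m₀ with hm
  set R := R₂ (E (φ m) * ε ^ 2 / (12 * M ^ 2))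
  have hmK : m ∈ Finset.Icc m₀ (K ε₀ fs + m₀) := Finset.mem_Icc.2 ⟨by omega, by omega⟩
  have hfs : n₀ + fs n₀ = m + f m := by show n₀ + (f m + m₀) = m + f m; omega
  have hf : 24 * M ^ 2 * (((R + g R : ℕ) : ℝ) - φ m - 1) / ε ^ 2 ≤ ((m + f m : ℕ) : ℝ) := by
    have h := (le_max_left _ _).trans (Nat.le_ceil _ : _ ≤ ((f m : ℕ) : ℝ))
    rw [Nat.cast_add m]
    refine le_trans ?_ (sub_le_iff_le_add'.1 h)
    gcongr
    exact le_max_left _ _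
  refine ⟨R, (le_max_left _ _).trans (Finset.le_sup
    (f := fun k => max (R₂ (E k * ε ^ 2 / (12 * M ^ 2))) (k + 1))
    (Finset.mem_Icc.2 ⟨Nat.sInf_le ⟨m, Finset.mem_Icc.1 hmK, rfl⟩, Finset.le_sup hmK⟩)), ?_⟩
  exact IsDualitySelection.halpern_metastable_of_resolvent_close hJ hS hSB hB huB hxB hα' hx
    (hωpos M hM) (hω M hM) hzB hz hε hεM
    ((Nat.le_ceil _).trans (by exact_mod_cast Nat.le_add_left _ _))
    (Nat.le_add_right m (f m)) (hn₀ m ⟨by omega, by omega⟩ _ ⟨by omega, hfs.ge⟩)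
    (fun i hi => halpern_asymptotic_regularity_s5 hS hSB hB huB hxB hα' hx hR₁ hR₂ hR₃ hE hM
      (by positivity) hi) (hE _).1 (hE _).2 (hR₂ _ (by have := (hE (φ m)).1; positivity)) hf

open Finset in
/-- Rate of metastability for the Halpern iteration in Banach spaces with a
uniformly continuous duality selection mapping, relative to a rate of
metastability `K` for the resolvent `(z_m)` (quantitative version of Xu's
theorem). -/
theorem halpern_metastability
    {X : Type*} [NormedAddCommGroup X] [NormedSpace ℝ X] [CompleteSpace X]
    (J : X → X →L[ℝ] ℝ)
    (hJ : ∀ v : X, J v v = ‖v‖ ^ 2 ∧ ‖J v‖ ^ 2 = ‖v‖ ^ 2)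
    (ω : ℝ → ℝ → ℝ)
    (hωpos : ∀ M' > (0 : ℝ), ∀ ε' > (0 : ℝ), 0 < ω M' ε')
    (hω : ∀ M' > (0 : ℝ), ∀ ε' > (0 : ℝ), ∀ v w : X,
      ‖v‖ ≤ M' → ‖w‖ ≤ M' → ‖v - w‖ < ω M' ε' → ‖J v - J w‖ < ε')
    (C : Set X) (hCclosed : IsClosed C) (hCconv : Convex ℝ C)
    (S : X → X) (hSmaps : Set.MapsTo S C C)
    (hSne : ∀ v ∈ C, ∀ w ∈ C, ‖S v - S w‖ ≤ ‖v - w‖)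
    (p : X) (hp : p ∈ C) (hpfix : S p = p)
    (u x₀ : X) (hu : u ∈ C) (hx₀ : x₀ ∈ C)
    (M : ℝ) (hM : 0 < M)
    (hbound : 2 * max ‖p - x₀‖ ‖p - u‖ ≤ M)
    (z : ℕ → X) (hzC : ∀ m : ℕ, 1 ≤ m → z m ∈ C)
    (hz : ∀ m : ℕ, 1 ≤ m →
      z m = (1 / m : ℝ) • u + (1 - 1 / m : ℝ) • S (z m))
    (K : ℝ → (ℕ → ℕ) → ℕ)
    (hK : ∀ ε > (0 : ℝ), ∀ g : ℕ → ℕ, ∃ n ≤ K ε g,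
      ∀ k ∈ Set.Icc n (n + g n), ∀ l ∈ Set.Icc n (n + g n), ‖z k - z l‖ ≤ ε)
    (α : ℕ → ℝ) (hα : ∀ n, α n ∈ Set.Ioo (0 : ℝ) 1)
    (R₁ R₂ R₃ : ℝ → ℕ)
    (hR₁ : ∀ ε > (0 : ℝ), ∀ n, R₁ ε ≤ n → α n ≤ ε)
    (hR₂ : ∀ ε > (0 : ℝ), ∏ k ∈ Finset.range (R₂ ε + 1), (1 - α k) ≤ ε)
    (hR₃ : ∀ ε > (0 : ℝ), ∀ n, R₃ ε ≤ n → |α n - α (n - 1)| ≤ ε * α n)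
    (E : ℕ → ℝ)
    (hE : ∀ k : ℕ, 0 < E k ∧ E k ≤ ∏ n ∈ Finset.range (k + 1), (1 - α n))
    (x : ℕ → X) (hx0 : x 0 = x₀)
    (hx : ∀ n, x (n + 1) = α n • u + (1 - α n) • S (x n)) :
    ∀ ε > (0 : ℝ), ∀ g : ℕ → ℕ,
      let δ : ℝ := ε ^ 2 / (144 * M)
      let ε₀ : ℝ := min δ (ω M δ)
      let D : ℝ → ℝ := fun ε' => E (R₃ (ε' / (3 * M)))
      let ψ : ℝ → ℕ := fun ε' =>
        max (R₁ (ε' / (2 * M)))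
          (max (R₂ (ε' * D (ε' / 2) / (6 * M))) (R₃ (ε' / (6 * M))))
      let φ : ℕ → ℕ := fun k => ψ (ε ^ 2 / (72 * M * k))
      let m₀ : ℕ := ⌈72 * M ^ 2 / ε ^ 2⌉₊
      let gs : ℕ → ℕ := fun k => k + g k
      let Et : ℕ → ℝ := fun k => E (φ k)
      let f : ℕ → ℕ := fun k =>
        ⌈max (24 * M ^ 2 *
            ((max ((gs (R₂ (Et k * ε ^ 2 / (12 * M ^ 2)))) : ℝ) ((φ k : ℝ) + 1)
              - (φ k : ℝ) - 1)) / ε ^ 2 - (k : ℝ)) 0⌉₊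
      let fs : ℕ → ℕ := fun k => f (k + m₀) + m₀
      let Γ : ℕ := (Finset.Icc m₀ (K ε₀ fs + m₀)).sup φ
      let Γt : ℕ := sInf (φ '' Set.Icc m₀ (K ε₀ fs + m₀))
      let Sig : ℕ := (Finset.Icc Γt Γ).sup
        (fun k => max (R₂ (E k * ε ^ 2 / (12 * M ^ 2))) (k + 1))
      ∃ n ≤ Sig, ∀ k ∈ Set.Icc n (n + g n), ∀ l ∈ Set.Icc n (n + g n),
        ‖x k - x l‖ ≤ ε :=
  halpern_metastability_general J hJ ω hωpos hω C hCconv S hSmaps hSne p hp hpfix u x₀ hu hx₀ M hM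
    hbound z hzC hz K hK α hα R₁ R₂ R₃ hR₁ hR₂ hR₃ E hE x hx0 hx
end

section
/- Let X be a real normed space, C ⊆ X a convex subset, S : C → C a nonexpansive mapping, u, x₀ ∈ C, (α_n) ⊆ [0,1], and let (x_n) be the Halpern iteration x_{n+1} := α_n u + (1 − α_n) S x_n. Then for all n ≥ 1, ‖x_{n+1} − x_n‖ ≤ (1 − α_n)·‖x_n − x_{n−1}‖ + |α_n − α_{n−1}|·‖u − S x_{n−1}‖. -/
/-- Consecutive-difference estimate for the Halpern iteration. -/
theorem halpern_consecutive_difference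
    {X : Type*} [NormedAddCommGroup X] [NormedSpace ℝ X]
    (C : Set X) (hCconv : Convex ℝ C)
    (S : X → X) (hSmaps : Set.MapsTo S C C)
    (hSne : ∀ x ∈ C, ∀ y ∈ C, ‖S x - S y‖ ≤ ‖x - y‖)
    (u x₀ : X) (hu : u ∈ C) (hx₀ : x₀ ∈ C)
    (α : ℕ → ℝ) (hα : ∀ n, α n ∈ Set.Icc (0 : ℝ) 1)
    (x : ℕ → X) (hx0 : x 0 = x₀)
    (hx : ∀ n, x (n + 1) = α n • u + (1 - α n) • S (x n)) :
    ∀ n : ℕ, 1 ≤ n →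
      ‖x (n + 1) - x n‖ ≤
        (1 - α n) * ‖x n - x (n - 1)‖ +
          |α n - α (n - 1)| * ‖u - S (x (n - 1))‖ := by
  have hmem : ∀ n, x n ∈ C := by
    intro n
    induction n with
    | zero => rw [hx0]; exact hx₀
    | succ m ih =>
      rw [hx m]
      exact hCconv hu (hSmaps ih) (hα m).1 (by linarith [(hα m).2]) (by ring)
  intro n hn
  obtain ⟨m, rfl⟩ : ∃ m, n = m + 1 := ⟨n - 1, (Nat.succ_pred_eq_of_pos hn).symm⟩
  simp only [Nat.add_sub_cancel]
  have key : x (m + 2) - x (m + 1) =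
      (α (m + 1) - α m) • (u - S (x m)) +
        (1 - α (m + 1)) • (S (x (m + 1)) - S (x m)) := by
    rw [hx (m + 1), hx m]
    module
  calc ‖x (m + 2) - x (m + 1)‖
      ≤ ‖(α (m + 1) - α m) • (u - S (x m))‖ +
          ‖(1 - α (m + 1)) • (S (x (m + 1)) - S (x m))‖ := by
        rw [key]; exact norm_add_le _ _
    _ ≤ (1 - α (m + 1)) * ‖x (m + 1) - x m‖ +
          |α (m + 1) - α m| * ‖u - S (x m)‖ := by
        rw [norm_smul, norm_smul, Real.norm_eq_abs, Real.norm_eq_abs,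
          abs_of_nonneg (show (0:ℝ) ≤ 1 - α (m + 1) by linarith [(hα (m + 1)).2])]
        have := hSne _ (hmem (m + 1)) _ (hmem m)
        nlinarith [norm_nonneg (u - S (x m)), (hα (m + 1)).2,
          norm_nonneg (S (x (m + 1)) - S (x m))]
end

section
/- Let X be a real normed space, C ⊆ X a convex subset, S : C → C a nonexpansive mapping, u ∈ C, m ≥ 1 an integer, and z ∈ C with z = (1/m) u + (1 − 1/m) S z. Let x ∈ C and let j be a continuous linear functional on X with j(x − z) = ‖x − z‖² and ‖j‖² = ‖x − z‖² (a normalized duality functional at x − z). Then 2·j(u − z) ≤ (1/m)·‖z − x‖² + m·‖S x − x‖·(2‖z − x‖ + ‖S x − x‖). -/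
/-- Key resolvent inequality: if `z = (1/m)·u + (1 − 1/m)·S z` and `j` is a
normalized duality functional at `x − z`, then
`2·j(u − z) ≤ (1/m)·‖z − x‖² + m·‖S x − x‖·(2‖z − x‖ + ‖S x − x‖)`. -/
theorem resolvent_duality_inequality
    {X : Type*} [NormedAddCommGroup X] [NormedSpace ℝ X]
    (C : Set X) (hCconv : Convex ℝ C)
    (S : X → X) (hSmaps : Set.MapsTo S C C)
    (hSne : ∀ x ∈ C, ∀ y ∈ C, ‖S x - S y‖ ≤ ‖x - y‖)
    (u : X) (hu : u ∈ C)
    (m : ℕ) (hm : 1 ≤ m)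
    (z : X) (hz : z ∈ C)
    (hzfix : z = (1 / m : ℝ) • u + (1 - 1 / m : ℝ) • S z)
    (x : X) (hx : x ∈ C)
    (j : X →L[ℝ] ℝ)
    (hj : j (x - z) = ‖x - z‖ ^ 2) (hjnorm : ‖j‖ ^ 2 = ‖x - z‖ ^ 2) :
    2 * j (u - z) ≤
      (1 / m : ℝ) * ‖z - x‖ ^ 2 +
        m * ‖S x - x‖ * (2 * ‖z - x‖ + ‖S x - x‖) := by
  have hm1 : (1 : ℝ) ≤ (m : ℝ) := by exact_mod_cast hm
  have hm0 : (m : ℝ) ≠ 0 := by positivity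
  -- ‖j‖ = ‖x − z‖
  have hjn : ‖j‖ = ‖x - z‖ := by
    have h1 : (0:ℝ) ≤ ‖j‖ := norm_nonneg _
    have h2 : (0:ℝ) ≤ ‖x - z‖ := norm_nonneg _
    nlinarith [hjnorm]
  -- u − z = (m − 1) • (z − S z)
  have key : u - z = ((m : ℝ) - 1) • (z - S z) := by
    have h := congrArg (fun w => (m : ℝ) • w) hzfix
    simp only [smul_add, smul_smul] at h
    rw [mul_one_div, div_self hm0, mul_sub, mul_one, mul_one_div, div_self hm0] at h
    rw [sub_smul, one_smul] at h ⊢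
    rw [smul_sub]
    have : (m : ℝ) • z = u + ((m : ℝ) • S z - S z) := by
      rw [h]; module
    rw [this]; module
  have hja : j (u - z) = ((m : ℝ) - 1) * j (z - S z) := by
    rw [key, map_smul]; rfl
  -- estimate j (z − S z)
  have hsplit : j (z - S z) = - ‖x - z‖ ^ 2 + j (x - S z) := by
    have : z - S z = -(x - z) + (x - S z) := by abel
    rw [this, map_add, map_neg, hj]
  have hne : ‖S x - S z‖ ≤ ‖x - z‖ := hSne x hx z hz
  have hxz : ‖x - S z‖ ≤ ‖S x - x‖ + ‖x - z‖ := by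
    have : x - S z = -(S x - x) + (S x - S z) := by abel
    rw [this]
    calc ‖-(S x - x) + (S x - S z)‖ ≤ ‖-(S x - x)‖ + ‖S x - S z‖ := norm_add_le _ _
      _ ≤ ‖S x - x‖ + ‖x - z‖ := by rw [norm_neg]; linarith
  have hjb : j (x - S z) ≤ ‖x - z‖ * (‖S x - x‖ + ‖x - z‖) := by
    calc j (x - S z) ≤ ‖j‖ * ‖x - S z‖ := by
          have := j.le_opNorm (x - S z)
          exact le_trans (le_abs_self _) (by simpa [Real.norm_eq_abs] using this)
      _ ≤ ‖x - z‖ * (‖S x - x‖ + ‖x - z‖) := by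
          rw [hjn]
          exact mul_le_mul_of_nonneg_left hxz (norm_nonneg _)
  have hjc : j (z - S z) ≤ ‖x - z‖ * ‖S x - x‖ := by
    rw [hsplit]; nlinarith [norm_nonneg (x - z)]
  have hnormswap : ‖z - x‖ = ‖x - z‖ := norm_sub_rev _ _
  rw [hja, hnormswap]
  have ha : (0:ℝ) ≤ ‖x - z‖ := norm_nonneg _
  have hb : (0:ℝ) ≤ ‖S x - x‖ := norm_nonneg _
  have hinv : (0:ℝ) ≤ (1 / m : ℝ) := by positivity
  nlinarith [mul_nonneg ha hb, mul_nonneg (mul_nonneg (sub_nonneg.mpr hm1) ha) hb,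
    sq_nonneg (‖x - z‖), sq_nonneg (‖S x - x‖),
    mul_le_mul_of_nonneg_left hjc (by linarith : (0:ℝ) ≤ 2 * ((m:ℝ) - 1))]
end

section
/- Let X be a real normed space, C ⊆ X a convex subset, S : C → C a nonexpansive mapping, u ∈ C, m ≥ 1 an integer, and z ∈ C with z = (1/m) u + (1 − 1/m) S z. Let x ∈ C, α ∈ [0,1], and set w := α·u + (1 − α)·S x. Let M > 0 satisfy ‖S z − u‖ ≤ M and ‖S x − z‖ ≤ M, and let j₁ be a normalized duality functional at w − z and j₂ a normalized duality functional at S x − z. Then ‖w − z‖² ≤ (1 − α)·‖x − z‖² + 2α·j₁(u − z) + 2M²/m. -/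
/-!
Write `J v` for the normalized duality functionals at `v`. For `j ∈ J v` and any `y`,
`‖v‖² = j (v - y) + j y ≤ ‖v‖ ‖v - y‖ + j y`, whence `‖v‖² ≤ ‖v - y‖² + 2 j y`.
Applied to `v = S x - z`, `y = S z - z = (1/m) (S z - u)` with `j₂`, this bounds `‖S x - z‖²` by
`‖x - z‖² + 2M²/m`; applied to `v = w - z`, `y = α (u - z)` with `j₁`, it bounds `‖w - z‖²` by
`(1 - α)² ‖S x - z‖² + 2α j₁ (u - z)`, and the two estimates combine since `(1 - α)² ≤ 1 - α`.
-/

section NormalizedDuality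

variable {E : Type*} [SeminormedAddCommGroup E] [NormedSpace ℝ E]

def IsNormalizedDuality (j : E →L[ℝ] ℝ) (v : E) : Prop :=
  j v = ‖v‖ ^ 2 ∧ ‖j‖ = ‖v‖

lemma isNormalizedDuality_of_sq {j : E →L[ℝ] ℝ} {v : E} (hj : j v = ‖v‖ ^ 2)
    (hjnorm : ‖j‖ ^ 2 = ‖v‖ ^ 2) : IsNormalizedDuality j v :=
  ⟨hj, (sq_eq_sq₀ (norm_nonneg _) (norm_nonneg _)).mp hjnorm⟩

namespace IsNormalizedDuality

variable {j : E →L[ℝ] ℝ} {v : E}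

lemma apply_le (h : IsNormalizedDuality j v) (y : E) : j y ≤ ‖v‖ * ‖y‖ :=
  (Real.le_norm_self _).trans (j.le_of_opNorm_le h.2.le y)

lemma sq_norm_le (h : IsNormalizedDuality j v) (y : E) :
    ‖v‖ ^ 2 ≤ ‖v - y‖ ^ 2 + 2 * j y := by
  have hsplit : j v = j (v - y) + j y := by rw [← map_add, sub_add_cancel]
  nlinarith [h.1, h.apply_le (v - y), two_mul_le_add_sq ‖v‖ ‖v - y‖]

end IsNormalizedDuality

end NormalizedDuality

lemma sub_eq_smul_sub_of_eq_add_smul {R M : Type*} [CommRing R] [AddCommGroup M] [Module R M]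
    {t : R} {u y z : M} (hz : z = t • u + (1 - t) • y) : y - z = t • (y - u) := by
  rw [hz]; module

theorem halpern_step_resolvent_inequality_general
    {X : Type*} [NormedAddCommGroup X] [NormedSpace ℝ X]
    (C : Set X)
    (S : X → X)
    (hSne : ∀ x ∈ C, ∀ y ∈ C, ‖S x - S y‖ ≤ ‖x - y‖)
    (u : X)
    (m : ℕ)
    (z : X) (hz : z ∈ C)
    (hzfix : z = (1 / m : ℝ) • u + (1 - 1 / m : ℝ) • S z)
    (x : X) (hx : x ∈ C)
    (α : ℝ) (hα : α ∈ Set.Icc (0 : ℝ) 1)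
    (w : X) (hw : w = α • u + (1 - α) • S x)
    (M : ℝ)
    (hM₁ : ‖S z - u‖ ≤ M) (hM₂ : ‖S x - z‖ ≤ M)
    (j₁ : X →L[ℝ] ℝ)
    (hj₁ : j₁ (w - z) = ‖w - z‖ ^ 2) (hj₁norm : ‖j₁‖ ^ 2 = ‖w - z‖ ^ 2)
    (j₂ : X →L[ℝ] ℝ)
    (hj₂ : j₂ (S x - z) = ‖S x - z‖ ^ 2) (hj₂norm : ‖j₂‖ ^ 2 = ‖S x - z‖ ^ 2) :
    ‖w - z‖ ^ 2 ≤
      (1 - α) * ‖x - z‖ ^ 2 + 2 * α * j₁ (u - z) + 2 * M ^ 2 / m := by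
  obtain ⟨hα₀, hα₁⟩ := hα
  have hJ₁ := isNormalizedDuality_of_sq hj₁ hj₁norm
  have hJ₂ := isNormalizedDuality_of_sq hj₂ hj₂norm
  have hM₀ : 0 ≤ M := (norm_nonneg _).trans hM₂
  have hSz : ‖S z - z‖ ≤ M / m := by
    rw [sub_eq_smul_sub_of_eq_add_smul hzfix, norm_smul, Real.norm_of_nonneg (by positivity),
      one_div_mul_eq_div]
    gcongr
  have hSx : ‖S x - z‖ ^ 2 ≤ ‖x - z‖ ^ 2 + 2 * M ^ 2 / m :=
    calc ‖S x - z‖ ^ 2 ≤ ‖S x - S z‖ ^ 2 + 2 * j₂ (S z - z) := by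
          simpa only [sub_sub_sub_cancel_right] using hJ₂.sq_norm_le (S z - z)
      _ ≤ ‖x - z‖ ^ 2 + 2 * (‖S x - z‖ * ‖S z - z‖) := by
          gcongr
          exacts [hSne x hx z hz, hJ₂.apply_le _]
      _ ≤ ‖x - z‖ ^ 2 + 2 * (M * (M / m)) := by gcongr
      _ = ‖x - z‖ ^ 2 + 2 * M ^ 2 / m := by ring
  have hw' : ‖w - z‖ ^ 2 ≤ (1 - α) ^ 2 * ‖S x - z‖ ^ 2 + 2 * α * j₁ (u - z) := by
    have hsplit : w - z - α • (u - z) = (1 - α) • (S x - z) := by rw [hw]; module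
    simpa only [hsplit, norm_smul, Real.norm_of_nonneg (sub_nonneg.2 hα₁), mul_pow, map_smul,
      smul_eq_mul, ← mul_assoc] using hJ₁.sq_norm_le (α • (u - z))
  have hK : 0 ≤ 2 * M ^ 2 / m := by positivity
  nlinarith [mul_le_mul_of_nonneg_left hSx (sub_nonneg.2 hα₁),
    mul_nonneg (mul_nonneg hα₀ (sub_nonneg.2 hα₁)) (sq_nonneg ‖S x - z‖)]

/-- Recursive estimate for a Halpern step against the resolvent point:
`‖w − z‖² ≤ (1 − α)·‖x − z‖² + 2α·j₁(u − z) + 2M²/m` where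
`w = α·u + (1 − α)·S x`. -/
theorem halpern_step_resolvent_inequality
    {X : Type*} [NormedAddCommGroup X] [NormedSpace ℝ X]
    (C : Set X) (hCconv : Convex ℝ C)
    (S : X → X) (hSmaps : Set.MapsTo S C C)
    (hSne : ∀ x ∈ C, ∀ y ∈ C, ‖S x - S y‖ ≤ ‖x - y‖)
    (u : X) (hu : u ∈ C)
    (m : ℕ) (hm : 1 ≤ m)
    (z : X) (hz : z ∈ C)
    (hzfix : z = (1 / m : ℝ) • u + (1 - 1 / m : ℝ) • S z)
    (x : X) (hx : x ∈ C)
    (α : ℝ) (hα : α ∈ Set.Icc (0 : ℝ) 1)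
    (w : X) (hw : w = α • u + (1 - α) • S x)
    (M : ℝ) (hM : 0 < M)
    (hM₁ : ‖S z - u‖ ≤ M) (hM₂ : ‖S x - z‖ ≤ M)
    (j₁ : X →L[ℝ] ℝ)
    (hj₁ : j₁ (w - z) = ‖w - z‖ ^ 2) (hj₁norm : ‖j₁‖ ^ 2 = ‖w - z‖ ^ 2)
    (j₂ : X →L[ℝ] ℝ)
    (hj₂ : j₂ (S x - z) = ‖S x - z‖ ^ 2) (hj₂norm : ‖j₂‖ ^ 2 = ‖S x - z‖ ^ 2) :
    ‖w - z‖ ^ 2 ≤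
      (1 - α) * ‖x - z‖ ^ 2 + 2 * α * j₁ (u - z) + 2 * M ^ 2 / m :=
  halpern_step_resolvent_inequality_general C S hSne u m z hz hzfix x hx α hα w hw M hM₁ hM₂ j₁ hj₁
    hj₁norm j₂ hj₂ hj₂norm
end

section
/- Let X be a real normed space and J : X → X* a duality selection mapping (i.e., ⟨x, Jx⟩ = ‖x‖² = ‖Jx‖² for all x ∈ X) which is norm-to-norm continuous. Then X is smooth: for all x, y ∈ X with ‖x‖ = ‖y‖ = 1, the limit lim_{λ→0} (‖x + λy‖ − ‖x‖)/λ exists and equals ⟨y, Jx⟩. -/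
/-!
If `f` is a norming functional at `x` (`f x = ‖x‖²`, `‖f‖ ≤ ‖x‖`), then
`f (v - x) ≤ ‖x‖ (‖v‖ - ‖x‖)` for every `v`: `f / ‖x‖` is a subgradient of the norm at `x`.
Using this at `x` and at `x + λy` traps the difference quotient `(‖x + λy‖ - ‖x‖) / λ`
between `J x y / ‖x‖` and `J (x + λy) y / ‖x + λy‖`, and continuity of `J` makes the
second bound converge to the first.
-/

open Filter Set Topology

section

variable {X : Type*} [NormedAddCommGroup X] [NormedSpace ℝ X]

lemma apply_sub_le_norm_mul_sub_norm {f : X →L[ℝ] ℝ} {x : X} (hfx : f x = ‖x‖ ^ 2)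
    (hf : ‖f‖ ≤ ‖x‖) (v : X) : f (v - x) ≤ ‖x‖ * (‖v‖ - ‖x‖) := by
  have hfv : f v ≤ ‖x‖ * ‖v‖ :=
    calc f v ≤ ‖f‖ * ‖v‖ := (le_abs_self _).trans (f.le_opNorm v)
      _ ≤ ‖x‖ * ‖v‖ := by gcongr
  rw [map_sub, hfx]
  linarith

lemma mem_uIcc_of_mul_sub_nonneg {l q a b : ℝ} (hl : l ≠ 0) (ha : 0 ≤ l * (q - a))
    (hb : 0 ≤ l * (b - q)) : q ∈ uIcc a b := by
  rcases hl.lt_or_gt with hneg | hpos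
  · exact mem_uIcc.2 <| Or.inr ⟨by nlinarith, by nlinarith⟩
  · exact mem_uIcc.2 <| Or.inl ⟨by nlinarith, by nlinarith⟩

lemma norm_add_smul_sub_div_mem_uIcc {f g : X →L[ℝ] ℝ} {x y : X} {l : ℝ} (hl : l ≠ 0)
    (hx : x ≠ 0) (hz : x + l • y ≠ 0) (hfx : f x = ‖x‖ ^ 2) (hf : ‖f‖ ≤ ‖x‖)
    (hgz : g (x + l • y) = ‖x + l • y‖ ^ 2) (hg : ‖g‖ ≤ ‖x + l • y‖) :
    (‖x + l • y‖ - ‖x‖) / l ∈ uIcc (f y / ‖x‖) (g y / ‖x + l • y‖) := by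
  have hxpos : 0 < ‖x‖ := norm_pos_iff.2 hx
  have hzpos : 0 < ‖x + l • y‖ := norm_pos_iff.2 hz
  have hfy : l * f y ≤ ‖x‖ * (‖x + l • y‖ - ‖x‖) := by
    simpa using apply_sub_le_norm_mul_sub_norm hfx hf (x + l • y)
  have hgy : -(l * g y) ≤ ‖x + l • y‖ * (‖x‖ - ‖x + l • y‖) := by
    simpa using apply_sub_le_norm_mul_sub_norm hgz hg x
  refine mem_uIcc_of_mul_sub_nonneg hl ?_ ?_
  · rw [mul_sub, mul_div_cancel₀ _ hl, mul_div_assoc', sub_nonneg, div_le_iff₀ hxpos]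
    linarith
  · rw [mul_sub, mul_div_cancel₀ _ hl, mul_div_assoc', sub_nonneg, le_div_iff₀ hzpos]
    linarith

theorem tendsto_norm_add_smul_sub_div_of_continuousAt {J : X → X →L[ℝ] ℝ}
    (hJ : ∀ x, J x x = ‖x‖ ^ 2) (hJnorm : ∀ x, ‖J x‖ ≤ ‖x‖) {x : X} (hx : x ≠ 0)
    (hJx : ContinuousAt J x) (y : X) :
    Tendsto (fun l : ℝ => (‖x + l • y‖ - ‖x‖) / l) (𝓝[≠] 0) (𝓝 (J x y / ‖x‖)) := by
  have hline : ContinuousAt (fun l : ℝ => x + l • y) 0 := by fun_prop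
  have hz₀ : x + (0 : ℝ) • y ≠ 0 := by simpa using hx
  have hupper : Tendsto (fun l : ℝ => J (x + l • y) y / ‖x + l • y‖) (𝓝 0)
      (𝓝 (J x y / ‖x‖)) := by
    have hJline : ContinuousAt (fun l : ℝ => J (x + l • y)) 0 :=
      ContinuousAt.comp (g := J) (by simpa using hJx) hline
    have h := (hJline.clm_apply (continuousAt_const (y := y))).tendsto.div hline.norm.tendsto
      (norm_ne_zero_iff.2 hz₀)
    rwa [zero_smul, add_zero] at h
  have hbetween : ∀ᶠ l in 𝓝[≠] (0 : ℝ), ‖(‖x + l • y‖ - ‖x‖) / l - J x y / ‖x‖‖ ≤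
      ‖J (x + l • y) y / ‖x + l • y‖ - J x y / ‖x‖‖ := by
    filter_upwards [self_mem_nhdsWithin, nhdsWithin_le_nhds (hline.eventually_ne hz₀)]
      with l hl hz
    exact abs_sub_left_of_mem_uIcc
      (norm_add_smul_sub_div_mem_uIcc hl hx hz (hJ x) (hJnorm x) (hJ _) (hJnorm _))
  have hupper_sub : Tendsto (fun l : ℝ => ‖J (x + l • y) y / ‖x + l • y‖ - J x y / ‖x‖‖)
      (𝓝[≠] 0) (𝓝 0) := by
    simpa using (tendsto_sub_nhds_zero_iff.2 (hupper.mono_left nhdsWithin_le_nhds)).norm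
  exact tendsto_sub_nhds_zero_iff.1 (squeeze_zero_norm' hbetween hupper_sub)

end

/-- A normed space with a norm-to-norm continuous duality selection mapping is
smooth: the one-sided limits of the difference quotient of the norm exist and
equal `⟨y, Jx⟩` on the unit sphere. -/
theorem smooth_of_continuous_duality_selection
    {X : Type*} [NormedAddCommGroup X] [NormedSpace ℝ X]
    (J : X → X →L[ℝ] ℝ)
    (hJ : ∀ x : X, J x x = ‖x‖ ^ 2 ∧ ‖J x‖ ^ 2 = ‖x‖ ^ 2)
    (hJcont : Continuous J) :
    ∀ x y : X, ‖x‖ = 1 → ‖y‖ = 1 →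
      Filter.Tendsto (fun l : ℝ => (‖x + l • y‖ - ‖x‖) / l)
        (nhdsWithin 0 {0}ᶜ) (nhds (J x y)) := by
  intro x y hx _
  have hx₀ : x ≠ 0 := by rintro rfl; simp at hx
  have hJnorm : ∀ x, ‖J x‖ ≤ ‖x‖ := fun x =>
    ((pow_left_inj₀ (norm_nonneg _) (norm_nonneg _) two_ne_zero).1 (hJ x).2).le
  simpa [hx] using tendsto_norm_add_smul_sub_div_of_continuousAt (fun x => (hJ x).1) hJnorm
    hx₀ hJcont.continuousAt y
end

section
/- Let X be a real normed space and J : X → X* a duality selection mapping (i.e., ⟨x, Jx⟩ = ‖x‖² = ‖Jx‖² for all x ∈ X) which is norm-to-norm uniformly continuous on bounded subsets of X (i.e., for all M, ε > 0 there is δ > 0 such that ‖x‖, ‖y‖ ≤ M and ‖x − y‖ ≤ δ imply ‖Jx − Jy‖ ≤ ε). Then X is uniformly smooth: for every ε > 0 there exists δ > 0 such that for all x, y ∈ X with ‖x‖ = ‖y‖ = 1 and all real λ with 0 < |λ| ≤ δ, one has |(‖x + λy‖ − ‖x‖)/λ − ⟨y, Jx⟩| ≤ ε. -/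
/-- A normed space with a duality selection mapping that is norm-to-norm
uniformly continuous on bounded sets is uniformly smooth: the difference
quotient of the norm converges to `⟨y, Jx⟩` uniformly on the unit sphere. -/
theorem uniformly_smooth_of_uniformly_continuous_duality_selection
    {X : Type*} [NormedAddCommGroup X] [NormedSpace ℝ X]
    (J : X → X →L[ℝ] ℝ)
    (hJ : ∀ x : X, J x x = ‖x‖ ^ 2 ∧ ‖J x‖ ^ 2 = ‖x‖ ^ 2)
    (hJuc : ∀ M > (0 : ℝ), ∀ ε > (0 : ℝ), ∃ δ > (0 : ℝ), ∀ x y : X,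
      ‖x‖ ≤ M → ‖y‖ ≤ M → ‖x - y‖ ≤ δ → ‖J x - J y‖ ≤ ε) :
    ∀ ε > (0 : ℝ), ∃ δ > (0 : ℝ), ∀ x y : X, ‖x‖ = 1 → ‖y‖ = 1 →
      ∀ l : ℝ, 0 < |l| → |l| ≤ δ →
        |(‖x + l • y‖ - ‖x‖) / l - J x y| ≤ ε := by
  intro ε hε
  obtain ⟨δ₁, hδ₁, huc⟩ := hJuc 2 (by norm_num) (ε / 2) (by linarith)
  refine ⟨min δ₁ (min (ε / 2) (1 / 2)), by positivity, ?_⟩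
  intro x y hx hy l hl hlδ
  have hnormJ : ∀ w : X, ‖J w‖ = ‖w‖ := fun w => by
    have h := (hJ w).2
    nlinarith [norm_nonneg (J w), norm_nonneg w]
  have hJle : ∀ w v : X, J w v ≤ ‖w‖ * ‖v‖ := fun w v => by
    have h := (J w).le_opNorm v
    rw [Real.norm_eq_abs] at h
    calc J w v ≤ |J w v| := le_abs_self _
      _ ≤ ‖J w‖ * ‖v‖ := h
      _ = ‖w‖ * ‖v‖ := by rw [hnormJ]
  set z := x + l • y with hz
  have hl1 : |l| ≤ δ₁ := le_trans hlδ (min_le_left _ _)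
  have hl2 : |l| ≤ ε / 2 := le_trans hlδ (le_trans (min_le_right _ _) (min_le_left _ _))
  have hl3 : |l| ≤ 1 / 2 := le_trans hlδ (le_trans (min_le_right _ _) (min_le_right _ _))
  have hzx : ‖z - x‖ = |l| := by
    simp [hz, norm_smul, hy, Real.norm_eq_abs]
  have hxz : ‖x - z‖ = |l| := by rw [norm_sub_rev, hzx]
  have hdiff : |‖z‖ - 1| ≤ |l| := by
    have h1 := norm_sub_norm_le z x
    have h2 := norm_sub_norm_le x z
    rw [hzx] at h1; rw [hxz] at h2
    rw [abs_le]; constructor <;> [linarith [hx ▸ h2]; linarith [hx ▸ h1]]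
  have hz_lb : 1 / 2 ≤ ‖z‖ := by
    have := abs_le.mp hdiff
    linarith [this.1]
  have hz_ub : ‖z‖ ≤ 2 := by
    have := abs_le.mp hdiff
    linarith [this.2]
  have hz_pos : (0 : ℝ) < ‖z‖ := by linarith
  -- lower subdifferential inequality : 1 + l * J x y ≤ ‖z‖
  have hJxz : J x z = 1 + l * J x y := by
    have := (hJ x).1
    simp [hz, map_add, map_smul, this, hx]
  have hlow : 1 + l * J x y ≤ ‖z‖ := by
    have h := hJle x z
    rw [hJxz, hx, one_mul] at h
    linarith
  -- upper subdifferential inequality : ‖z‖ * (‖z‖ - 1) ≤ l * J z y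
  have hJzz : ‖z‖ ^ 2 = J z x + l * J z y := by
    have h := (hJ z).1
    rw [← h]; simp [hz, map_add, map_smul]
  have hup : ‖z‖ * (‖z‖ - 1) ≤ l * J z y := by
    have h := hJle z x
    rw [hx, mul_one] at h
    nlinarith
  -- the quotient lies between J x y and J z y / ‖z‖
  set Q := (‖z‖ - ‖x‖) / l with hQ
  have hQ' : Q = (‖z‖ - 1) / l := by rw [hQ, hx]
  have hsand : |Q - J x y| ≤ |J z y / ‖z‖ - J x y| := by
    have hlne : l ≠ 0 := fun h0 => by simp [h0] at hl
    rcases lt_or_gt_of_ne hlne with hneg | hpos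
    · -- l < 0
      have h1 : Q ≤ J x y := by
        rw [hQ', div_le_iff_of_neg hneg]; linarith
      have h2 : J z y / ‖z‖ ≤ Q := by
        rw [hQ', le_div_iff_of_neg hneg, div_mul_eq_mul_div, le_div_iff₀ hz_pos]
        nlinarith
      rw [abs_sub_comm, abs_of_nonneg (by linarith), abs_sub_comm,
        abs_of_nonneg (by linarith)]
      linarith
    · -- l > 0
      have h1 : J x y ≤ Q := by
        rw [hQ', le_div_iff₀ hpos]; linarith
      have h2 : Q ≤ J z y / ‖z‖ := by
        rw [hQ', div_le_div_iff₀ hpos hz_pos]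
        nlinarith
      rw [abs_of_nonneg (by linarith), abs_of_nonneg (by linarith)]
      linarith
  -- bound the gap
  have hJd : |J z y - J x y| ≤ ε / 2 := by
    have h := huc z x hz_ub (by rw [hx]; norm_num) (hzx ▸ hl1)
    have h2 : |(J z - J x) y| ≤ ‖J z - J x‖ * ‖y‖ := by
      have := (J z - J x).le_opNorm y
      rwa [Real.norm_eq_abs] at this
    rw [hy, mul_one] at h2
    simp only [ContinuousLinearMap.sub_apply] at h2
    linarith
  have hJzy : |J z y| ≤ ‖z‖ := by
    have h1 : J z y ≤ ‖z‖ := by have := hJle z y; rwa [hy, mul_one] at this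
    have h2 : J z (-y) ≤ ‖z‖ := by
      have := hJle z (-y); rwa [norm_neg, hy, mul_one] at this
    rw [map_neg] at h2
    rw [abs_le]; constructor <;> linarith
  have hgap1 : |J z y / ‖z‖ - J z y| ≤ |l| := by
    have : J z y / ‖z‖ - J z y = J z y * (1 - ‖z‖) / ‖z‖ := by
      field_simp
    rw [this, abs_div, abs_mul, abs_of_pos hz_pos, div_le_iff₀ hz_pos]
    calc |J z y| * |1 - ‖z‖| ≤ ‖z‖ * |l| := by
          have := abs_sub_comm (‖z‖) 1 ▸ hdiff
          exact mul_le_mul hJzy this (abs_nonneg _) (norm_nonneg _)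
      _ = |l| * ‖z‖ := mul_comm _ _
  have : |J z y / ‖z‖ - J x y| ≤ ε := by
    have := abs_sub_le (J z y / ‖z‖) (J z y) (J x y)
    linarith
  calc |(‖x + l • y‖ - ‖x‖) / l - J x y| = |Q - J x y| := by rw [hQ]
    _ ≤ |J z y / ‖z‖ - J x y| := hsand
    _ ≤ ε := this
end

section
/- Let X be a real normed space and let J₁, J₂ : X → X* both be duality selection mappings (i.e., ⟨x, J_i x⟩ = ‖x‖² = ‖J_i x‖² for all x ∈ X, i = 1, 2) which are norm-to-norm continuous. Then J₁ = J₂. -/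
private lemma dsm_le {X : Type*} [NormedAddCommGroup X] [NormedSpace ℝ X]
    (J K : X → X →L[ℝ] ℝ)
    (hJ : ∀ x : X, J x x = ‖x‖ ^ 2 ∧ ‖J x‖ ^ 2 = ‖x‖ ^ 2)
    (hK : ∀ x : X, K x x = ‖x‖ ^ 2 ∧ ‖K x‖ ^ 2 = ‖x‖ ^ 2)
    (hKcont : Continuous K) (x v : X) : J x v ≤ K x v := by
  have hnorm : ∀ (L : X → X →L[ℝ] ℝ),
      (∀ y : X, L y y = ‖y‖ ^ 2 ∧ ‖L y‖ ^ 2 = ‖y‖ ^ 2) → ∀ y, ‖L y‖ = ‖y‖ := by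
    intro L hL y
    have h := (hL y).2
    nlinarith [norm_nonneg (L y), norm_nonneg y]
  -- key inequality for all t > 0
  have key : ∀ t : ℝ, 0 < t → J x v ≤ K (x + t • v) v := by
    intro t ht
    set y := x + t • v with hy
    have h1 : J x y ≤ ‖x‖ * ‖y‖ := by
      have h := (J x).le_opNorm y
      rw [hnorm J hJ] at h
      exact le_trans (le_abs_self _) (by simpa [Real.norm_eq_abs] using h)
    have h2 : K y x ≤ ‖y‖ * ‖x‖ := by
      have h := (K y).le_opNorm x
      rw [hnorm K hK] at h
      exact le_trans (le_abs_self _) (by simpa [Real.norm_eq_abs] using h)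
    have hJxx := (hJ x).1
    have hKyy := (hK y).1
    -- t * J x v = J x y - J x x ≤ (‖y‖² - ‖x‖²)/2
    have e1 : J x y = ‖x‖ ^ 2 + t * J x v := by
      rw [hy]; simp [map_add, map_smul, hJxx]
    have e2 : K y y = K y x + t * K y v := by
      rw [hy]; simp [map_add, map_smul]
    have hle1 : t * J x v ≤ (‖y‖ ^ 2 - ‖x‖ ^ 2) / 2 := by
      nlinarith [sq_nonneg (‖x‖ - ‖y‖)]
    have hle2 : (‖y‖ ^ 2 - ‖x‖ ^ 2) / 2 ≤ t * K y v := by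
      nlinarith [sq_nonneg (‖x‖ - ‖y‖)]
    have := le_trans hle1 hle2
    exact le_of_mul_le_mul_left (by linarith [mul_comm t (J x v), mul_comm t (K y v)]) ht
  -- take t → 0⁺
  have htend : Filter.Tendsto (fun t : ℝ => K (x + t • v) v) (nhdsWithin 0 (Set.Ioi 0))
      (nhds (K x v)) := by
    have hc : Continuous (fun t : ℝ => K (x + t • v) v) := by
      exact (ContinuousLinearMap.apply ℝ ℝ v).continuous.comp
        (hKcont.comp (by continuity))
    have h0 := (hc.tendsto (0 : ℝ)).mono_left
      (nhdsWithin_le_nhds (s := Set.Ioi (0 : ℝ)))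
    simpa using h0
  exact ge_of_tendsto htend (eventually_nhdsWithin_of_forall fun t ht => key t ht)

/-- A normed space has at most one norm-to-norm continuous duality selection
mapping. -/
theorem continuous_duality_selection_unique
    {X : Type*} [NormedAddCommGroup X] [NormedSpace ℝ X]
    (J₁ J₂ : X → X →L[ℝ] ℝ)
    (hJ₁ : ∀ x : X, J₁ x x = ‖x‖ ^ 2 ∧ ‖J₁ x‖ ^ 2 = ‖x‖ ^ 2)
    (hJ₂ : ∀ x : X, J₂ x x = ‖x‖ ^ 2 ∧ ‖J₂ x‖ ^ 2 = ‖x‖ ^ 2)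
    (hJ₁cont : Continuous J₁) (hJ₂cont : Continuous J₂) :
    J₁ = J₂ := by
  funext x
  apply ContinuousLinearMap.ext
  intro v
  exact le_antisymm (dsm_le J₁ J₂ hJ₁ hJ₂ hJ₂cont x v)
    (dsm_le J₂ J₁ hJ₂ hJ₁ hJ₁cont x v)
end
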